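/- arXiv:1201.6441 — 7 statements merged into one kernel-verified Lean document; each statement's English description precedes it below -/
import Mathlib

section
/- For the Moran partition chain on partitions of n: μ_1 P = μ_1 and μ_t P = λ_t μ_t + (1−λ_t) μ_{t−1} for every 2 ≤ t ≤ n. Equivalently, with Λ the n-row matrix whose row indexed by t ∈ {n, n−1, …, 1} is μ_t, and P̂ the n-by-n matrix (rows and columns indexed by n, n−1, …, 1) with P̂(t,t) = λ_t, P̂(t,t−1) = 1−λ_t for 2 ≤ t ≤ n, P̂(1,1) = 1, and all other entries 0, one has Λ P = P̂ Λ and δ_{(1,…,1)} = δ_n Λ: the chains (δ_{(1,…,1)}, P) and (δ_n, P̂) are intertwined by the link Λ. -/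
open Matrix

/-- The multiset of parts obtained from `m` by replacing two distinct parts `a`, `b`
(chosen at distinct positions) by `a + 1` and `b - 1`, deleting `b - 1` if it is `0`. -/
def moranMove (m : Multiset ℕ) (a b : ℕ) : Multiset ℕ :=
  (a + 1) ::ₘ (if b = 1 then (m.erase a).erase b else (b - 1) ::ₘ ((m.erase a).erase b))

/-- The transition matrix of the Moran partition chain on partitions of `n`: from a
partition with parts `n_1, …, n_r`, move to the partition obtained by replacing two parts
`n_i, n_j` (at distinct positions) by `n_i + 1, n_j − 1` with probability
`n_i n_j / (n(n−1))` for each ordered pair of distinct positions `(i,j)`, and stay put with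
the leftover probability `Σ_i n_i(n_i−1)/(n(n−1))`. -/
noncomputable def moranP (n : ℕ) (r s : Nat.Partition n) : ℝ :=
  (((r.parts.map (fun a =>
      ((r.parts.erase a).map (fun b =>
        if moranMove r.parts a b = s.parts then ((a : ℝ) * (b : ℝ)) else 0)).sum)).sum)
    + (if r = s then (r.parts.map (fun a => (a : ℝ) * ((a : ℝ) - 1))).sum else 0))
    / ((n : ℝ) * ((n : ℝ) - 1))

/-- The row vector `μ_t` indexed by partitions of `n`: `μ_t(r) = m_r / C(n−1, t−1)` if `r`
has exactly `t` parts (where `m_r = t!/(r_1!⋯r_n!)` and `r_i` is the number of parts of `r`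
equal to `i`), and `0` otherwise. -/
noncomputable def moranMu (n t : ℕ) : Nat.Partition n → ℝ := fun r =>
  if r.parts.card = t then
    ((t.factorial : ℝ) / ∏ i ∈ Finset.Icc 1 n, ((r.parts.count i).factorial : ℝ))
      / ((n - 1).choose (t - 1) : ℝ)
  else 0

/-- `λ_t = 1 − t(t−1)/(n(n−1))`. -/
noncomputable def moranLam (n t : ℕ) : ℝ :=
  1 - ((t : ℝ) * ((t : ℝ) - 1)) / ((n : ℝ) * ((n : ℝ) - 1))

/-!
`μ_t` is the law of the multiset of parts of a uniformly random composition of `n` into `t`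
positive parts: `m_r` of the `C(n-1, t-1)` compositions have parts `r`. So one may lift a step of
the chain to compositions. Moving a unit from part `j` to part `i` when `c j ≥ 2` is a bijection
onto the compositions `d` with `d i ≥ 2`, turning the weight `c i * c j` into
`(d i - 1) * (d j + 1)`; when `c j = 1` the two parts merge into a composition `e` with `t - 1`
parts, and the weight becomes `e k - 1` where `k` is the merged part. For a fixed composition,
the sum of these weights over all ordered pairs (plus the holding weight `∑ dᵢ (dᵢ - 1)`) is the
constant `n(n-1) - t(t-1)`, resp. `t(n-t+1)`, and `(t-1) C(n-1, t-1) = (n-t+1) C(n-1, t-2)` turns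
the second one into the coefficient `t(t-1)` of `μ_{t-1}`.
-/
open Finset Function
open scoped Nat

namespace Moran

section TupleMultiset

variable {α ι : Type*} [Fintype ι]

def tupleMultiset (c : ι → α) : Multiset α := univ.val.map c

lemma card_tupleMultiset (c : ι → α) : Multiset.card (tupleMultiset c) = Fintype.card ι := by
  simp [tupleMultiset]

lemma mem_tupleMultiset_self (c : ι → α) (i : ι) : c i ∈ tupleMultiset c :=
  Multiset.mem_map_of_mem c (mem_univ_val i)

lemma sum_map_tupleMultiset {M : Type*} [AddCommMonoid M] (c : ι → α) (g : α → M) :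
    ((tupleMultiset c).map g).sum = ∑ i, g (c i) := by
  rw [tupleMultiset, Multiset.map_map]
  rfl

lemma sum_tupleMultiset {M : Type*} [AddCommMonoid M] (c : ι → M) :
    (tupleMultiset c).sum = ∑ i, c i := rfl

variable [DecidableEq ι] [DecidableEq α]

lemma erase_tupleMultiset (c : ι → α) (k : ι) :
    (tupleMultiset c).erase (c k) = (univ.erase k).val.map c := by
  rw [tupleMultiset, ← Multiset.cons_erase (mem_univ_val k), ← Finset.erase_val, Multiset.map_cons,
    Multiset.erase_cons_head]

lemma mem_erase_tupleMultiset (c : ι → α) {i j : ι} (hij : i ≠ j) :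
    c i ∈ (tupleMultiset c).erase (c j) := by
  rw [erase_tupleMultiset]
  exact Multiset.mem_map_of_mem c (mem_erase.2 ⟨hij, mem_univ i⟩)

lemma tupleMultiset_update (c : ι → α) (k : ι) (x : α) :
    tupleMultiset (update c k x) = x ::ₘ (tupleMultiset c).erase (c k) := by
  rw [← Multiset.cons_erase (mem_tupleMultiset_self (update c k x) k), erase_tupleMultiset,
    erase_tupleMultiset, update_self]
  congr 1
  exact Multiset.map_congr rfl fun l hl => update_of_ne (ne_of_mem_erase (mem_def.2 hl)) x c

lemma tupleMultiset_removeNth {u : ℕ} (c : Fin (u + 1) → α) (j : Fin (u + 1)) :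
    tupleMultiset (j.removeNth c) = (tupleMultiset c).erase (c j) := by
  rw [erase_tupleMultiset, tupleMultiset, Fin.univ_succAbove u j, Finset.erase_cons, map_val,
    Multiset.map_map]
  rfl

lemma tupleMultiset_eq_cons_removeNth {u : ℕ} (c : Fin (u + 1) → α) (j : Fin (u + 1)) :
    tupleMultiset c = c j ::ₘ tupleMultiset (j.removeNth c) := by
  rw [tupleMultiset_removeNth, Multiset.cons_erase (mem_tupleMultiset_self c j)]

lemma tupleMultiset_insertNth {u : ℕ} (j : Fin (u + 1)) (x : α) (e : Fin u → α) :
    tupleMultiset (j.insertNth x e) = x ::ₘ tupleMultiset e := by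
  rw [tupleMultiset_eq_cons_removeNth _ j, Fin.insertNth_apply_same, Fin.removeNth_insertNth]

end TupleMultiset

section Multinomial

variable {α : Type*} [DecidableEq α]

def tuplesWith (t : ℕ) (m : Multiset α) : Finset (Fin t → α) :=
  {c ∈ Fintype.piFinset fun _ => m.toFinset | tupleMultiset c = m}

lemma mem_tuplesWith {t : ℕ} {m : Multiset α} {c : Fin t → α} :
    c ∈ tuplesWith t m ↔ tupleMultiset c = m := by
  simp only [tuplesWith, mem_filter, Fintype.mem_piFinset, Multiset.mem_toFinset,
    and_iff_right_iff_imp]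
  rintro rfl i
  exact mem_tupleMultiset_self c i

lemma card_tuplesWith_filter_apply_zero {u : ℕ} {m : Multiset α} {v : α} (hv : v ∈ m) :
    #{c ∈ tuplesWith (u + 1) m | c 0 = v} = #(tuplesWith u (m.erase v)) := by
  refine card_nbij' (Fin.removeNth 0) (Fin.insertNth (α := fun _ => α) 0 v) ?_ ?_ ?_ ?_
  · intro c hc
    simp only [coe_filter, Set.mem_ofPred_eq, mem_tuplesWith] at hc
    simp only [mem_coe, mem_tuplesWith, tupleMultiset_removeNth, hc.1, hc.2]
  · intro e he
    simp only [mem_coe, mem_tuplesWith] at he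
    simp only [coe_filter, Set.mem_ofPred_eq, mem_tuplesWith, tupleMultiset_insertNth, he,
      Multiset.cons_erase hv, Fin.insertNth_apply_same, and_self]
  · intro c hc
    simp only [coe_filter, Set.mem_ofPred_eq] at hc
    simp only [← hc.2, Fin.insertNth_self_removeNth]
  · intro e _
    exact Fin.removeNth_insertNth (α := fun _ => α) 0 v e

lemma prod_factorial_count_erase {m : Multiset α} {S : Finset α} {v : α} (hv : v ∈ m)
    (hS : v ∈ S) :
    ∏ x ∈ S, (m.count x)! = m.count v * ∏ x ∈ S, ((m.erase v).count x)! := by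
  rw [← mul_prod_erase S _ hS, ← mul_prod_erase S _ hS, Multiset.count_erase_self, ← mul_assoc,
    Nat.mul_factorial_pred (Multiset.count_ne_zero.2 hv)]
  congr 1
  exact prod_congr rfl fun x hx => by rw [Multiset.count_erase_of_ne (ne_of_mem_erase hx)]

theorem card_tuplesWith_mul_prod_factorial {t : ℕ} {m : Multiset α} {S : Finset α}
    (hm : Multiset.card m = t) (hS : m.toFinset ⊆ S) :
    #(tuplesWith t m) * ∏ x ∈ S, (m.count x)! = t ! := by
  induction t generalizing m with
  | zero =>
    obtain rfl := Multiset.card_eq_zero.1 hm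
    simp [tuplesWith, tupleMultiset]
  | succ u ih =>
    have hfib : Set.MapsTo (fun c : Fin (u + 1) → α => c 0) (tuplesWith (u + 1) m) m.toFinset :=
      fun c hc => by
        simpa [← mem_tuplesWith.1 hc] using mem_tupleMultiset_self c 0
    rw [card_eq_sum_card_fiberwise hfib, sum_mul]
    calc ∑ v ∈ m.toFinset, #{c ∈ tuplesWith (u + 1) m | c 0 = v} * ∏ x ∈ S, (m.count x)!
        = ∑ v ∈ m.toFinset, m.count v * u ! := sum_congr rfl fun v hv => by
          have hvm := Multiset.mem_toFinset.1 hv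
          rw [card_tuplesWith_filter_apply_zero hvm, prod_factorial_count_erase hvm (hS hv),
            mul_left_comm, ih (by simp [Multiset.card_erase_of_mem hvm, hm])
              (subset_trans (Multiset.toFinset_subset.2 (Multiset.erase_subset v m)) hS)]
      _ = (u + 1)! := by rw [← sum_mul, Multiset.toFinset_sum_count_eq, hm, Nat.factorial_succ]

end Multinomial

section Compositions

variable {n t : ℕ}

def compositions (n t : ℕ) : Finset (Fin t → ℕ) :=
  {c ∈ Finset.Nat.antidiagonalTuple t n | ∀ i, 0 < c i}

lemma mem_compositions {c : Fin t → ℕ} :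
    c ∈ compositions n t ↔ (∀ i, 0 < c i) ∧ ∑ i, c i = n := by
  simp [compositions, Finset.Nat.mem_antidiagonalTuple, and_comm]

def partitionOfComposition {c : Fin t → ℕ} (hc : c ∈ compositions n t) : Nat.Partition n where
  parts := tupleMultiset c
  parts_pos hi := by
    obtain ⟨i, -, rfl⟩ := Multiset.mem_map.1 hi
    exact (mem_compositions.1 hc).1 i
  parts_sum := (mem_compositions.1 hc).2

lemma filter_compositions_eq_tuplesWith (s : Nat.Partition n) :
    {c ∈ compositions n t | tupleMultiset c = s.parts} = tuplesWith t s.parts := by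
  ext c
  simp only [mem_filter, mem_compositions, mem_tuplesWith, and_iff_right_iff_imp]
  intro hc
  exact ⟨fun i => s.parts_pos (hc ▸ mem_tupleMultiset_self c i),
    by rw [← sum_tupleMultiset, hc, s.parts_sum]⟩

lemma moranMu_eq_card_div (s : Nat.Partition n) (t : ℕ) :
    moranMu n t s
      = #{c ∈ compositions n t | tupleMultiset c = s.parts} / ((n - 1).choose (t - 1) : ℝ) := by
  rw [moranMu, filter_compositions_eq_tuplesWith]
  split_ifs with h
  · have hS : s.parts.toFinset ⊆ Icc 1 n := fun x hx => by
      rw [Multiset.mem_toFinset] at hx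
      exact mem_Icc.2 ⟨s.parts_pos hx, s.le_of_mem_parts hx⟩
    congr 1
    rw [div_eq_iff (by positivity)]
    exact_mod_cast (card_tuplesWith_mul_prod_factorial h hS).symm
  · have hempty : tuplesWith t s.parts = ∅ := eq_empty_of_forall_notMem fun c hc => h (by
      rw [← mem_tuplesWith.1 hc, card_tupleMultiset, Fintype.card_fin])
    simp [hempty]

lemma sum_compositions_eq_sum_partitions {M : Type*} [AddCommMonoid M] (f : Multiset ℕ → M) :
    ∑ c ∈ compositions n t, f (tupleMultiset c)
      = ∑ r : Nat.Partition n, #{c ∈ compositions n t | tupleMultiset c = r.parts} • f r.parts := by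
  have hmaps : ∀ c ∈ compositions n t, tupleMultiset c ∈ univ.image Nat.Partition.parts :=
    fun c hc => mem_image.2 ⟨partitionOfComposition hc, mem_univ _, rfl⟩
  rw [← sum_fiberwise_of_maps_to hmaps,
    sum_image fun r _ r' _ h => Nat.Partition.ext h]
  refine sum_congr rfl fun r _ => ?_
  rw [sum_congr rfl fun c hc => by rw [(mem_filter.1 hc).2], sum_const]

end Compositions

lemma sum_update_add_apply {ι M : Type*} [Fintype ι] [DecidableEq ι] [AddCommMonoid M]
    (f : ι → M) (k : ι) (x : M) :
    ∑ l, update f k x l + f k = ∑ l, f l + x := by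
  rw [sum_update_of_mem (mem_univ k), ← add_sum_erase univ f (mem_univ k),
    sdiff_singleton_eq_erase]
  abel

section Moves

variable {n t u : ℕ}

def moveUnit (i j : Fin t) (c : Fin t → ℕ) : Fin t → ℕ :=
  update (update c j (c j - 1)) i (c i + 1)

lemma moveUnit_apply_left (i j : Fin t) (c : Fin t → ℕ) : moveUnit i j c i = c i + 1 :=
  update_self ..

lemma moveUnit_apply_right {i j : Fin t} (hij : i ≠ j) (c : Fin t → ℕ) :
    moveUnit i j c j = c j - 1 := by
  rw [moveUnit, update_of_ne hij.symm, update_self]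

lemma moveUnit_moveUnit {i j : Fin t} (hij : i ≠ j) {c : Fin t → ℕ} (hc : 1 ≤ c j) :
    moveUnit j i (moveUnit i j c) = c := by
  funext k
  simp only [moveUnit, update_apply]
  split_ifs <;> subst_vars <;> omega

lemma moveUnit_mem_compositions {i j : Fin t} (hij : i ≠ j) {c : Fin t → ℕ}
    (hc : c ∈ compositions n t) (h2 : 2 ≤ c j) : moveUnit i j c ∈ compositions n t := by
  obtain ⟨hpos, hsum⟩ := mem_compositions.1 hc
  refine mem_compositions.2 ⟨fun k => ?_, ?_⟩
  · simp only [moveUnit, update_apply]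
    split_ifs <;> subst_vars <;> first | omega | exact hpos k
  · have h1 := sum_update_add_apply (update c j (c j - 1)) i (c i + 1)
    have h2' := sum_update_add_apply c j (c j - 1)
    rw [update_of_ne hij] at h1
    rw [moveUnit]
    omega

lemma tupleMultiset_moveUnit {i j : Fin (u + 1)} (hij : i ≠ j) (c : Fin (u + 1) → ℕ) :
    tupleMultiset (moveUnit i j c)
      = (c i + 1) ::ₘ (c j - 1) ::ₘ ((tupleMultiset c).erase (c i)).erase (c j) := by
  rw [moveUnit, tupleMultiset_update, tupleMultiset_update, update_of_ne hij,
    Multiset.erase_cons_tail_of_mem (mem_erase_tupleMultiset c hij), Multiset.erase_comm]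

lemma moranMove_eq_moveUnit {i j : Fin (u + 1)} (hij : i ≠ j) {c : Fin (u + 1) → ℕ}
    (hc : c j ≠ 1) : moranMove (tupleMultiset c) (c i) (c j) = tupleMultiset (moveUnit i j c) := by
  rw [moranMove, if_neg hc, tupleMultiset_moveUnit hij]

lemma sum_moveUnit {i j : Fin t} (hij : i ≠ j) (F : (Fin t → ℕ) → ℝ) :
    ∑ c ∈ compositions n t with 2 ≤ c j, F (moveUnit i j c) * (c i * c j)
      = ∑ d ∈ compositions n t, F d * ((d i - 1) * (d j + 1)) := by
  rw [← sum_filter_of_ne (s := compositions n t) (p := fun d => 2 ≤ d i) fun d hd hne => ?_]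
  · refine sum_nbij' (moveUnit i j) (moveUnit j i) (fun c hc => ?_) (fun d hd => ?_)
      (fun c hc => ?_) (fun d hd => ?_) (fun c hc => ?_) <;> simp only [mem_filter] at *
    · exact ⟨moveUnit_mem_compositions hij hc.1 hc.2,
        by rw [moveUnit_apply_left]; exact Nat.succ_le_succ ((mem_compositions.1 hc.1).1 i)⟩
    · exact ⟨moveUnit_mem_compositions hij.symm hd.1 hd.2,
        by rw [moveUnit_apply_left]; exact Nat.succ_le_succ ((mem_compositions.1 hd.1).1 j)⟩
    · exact moveUnit_moveUnit hij (by omega)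
    · exact moveUnit_moveUnit hij.symm (by omega)
    · rw [moveUnit_apply_left, moveUnit_apply_right hij, Nat.cast_sub (by omega)]
      push_cast
      ring
  · have := (mem_compositions.1 hd).1 i
    by_contra h
    exact hne (by rw [show d i = 1 by omega]; simp)

end Moves

section Merges

variable {n u : ℕ}

-- Part `i` absorbs part `i.succAbove j` (of size one); the merged part takes the index `j`
-- that part `i.succAbove j` has once `i` is removed.
def mergeUnit (i : Fin (u + 1)) (j : Fin u) (c : Fin (u + 1) → ℕ) : Fin u → ℕ :=
  update (i.removeNth c) j (c i + 1)

def splitUnit (i : Fin (u + 1)) (j : Fin u) (d : Fin u → ℕ) : Fin (u + 1) → ℕ :=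
  i.insertNth (d j - 1) (update d j 1)

lemma splitUnit_mergeUnit {i : Fin (u + 1)} {j : Fin u} {c : Fin (u + 1) → ℕ}
    (hc : c (i.succAbove j) = 1) : splitUnit i j (mergeUnit i j c) = c := by
  have h : update (i.removeNth c) j 1 = i.removeNth c := by
    rw [update_eq_iff]
    exact ⟨hc.symm, fun _ _ => rfl⟩
  rw [splitUnit, mergeUnit, update_self, update_idem, Nat.add_sub_cancel, h,
    Fin.insertNth_self_removeNth]

lemma mergeUnit_splitUnit {i : Fin (u + 1)} {j : Fin u} {d : Fin u → ℕ} (hd : 1 ≤ d j) :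
    mergeUnit i j (splitUnit i j d) = d := by
  rw [mergeUnit, splitUnit, Fin.removeNth_insertNth, Fin.insertNth_apply_same, update_idem,
    Nat.sub_add_cancel hd, update_eq_self]

lemma mergeUnit_mem_compositions {i : Fin (u + 1)} {j : Fin u} {c : Fin (u + 1) → ℕ}
    (hc : c ∈ compositions n (u + 1)) (h1 : c (i.succAbove j) = 1) :
    mergeUnit i j c ∈ compositions n u := by
  obtain ⟨hpos, hsum⟩ := mem_compositions.1 hc
  refine mem_compositions.2 ⟨fun k => ?_, ?_⟩
  · rcases eq_or_ne k j with rfl | hk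
    · simp [mergeUnit]
    · rw [mergeUnit, update_of_ne hk, Fin.removeNth_apply]
      exact hpos _
  · have h := sum_update_add_apply (i.removeNth c) j (c i + 1)
    rw [Fin.removeNth_apply, h1] at h
    rw [Fin.sum_univ_succAbove c i] at hsum
    simp only [mergeUnit, Fin.removeNth_apply] at h ⊢
    omega

lemma splitUnit_mem_compositions {i : Fin (u + 1)} {j : Fin u} {d : Fin u → ℕ}
    (hd : d ∈ compositions n u) (h2 : 2 ≤ d j) :
    splitUnit i j d ∈ compositions n (u + 1) := by
  obtain ⟨hpos, hsum⟩ := mem_compositions.1 hd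
  refine mem_compositions.2 ⟨(Fin.forall_iff_succAbove i).2 ⟨?_, fun k => ?_⟩, ?_⟩
  · rw [splitUnit, Fin.insertNth_apply_same]
    omega
  · rw [splitUnit, Fin.insertNth_apply_succAbove, update_apply]
    split_ifs
    · exact Nat.one_pos
    · exact hpos k
  · have h := sum_update_add_apply d j 1
    rw [Fin.sum_univ_succAbove _ i]
    simp only [splitUnit, Fin.insertNth_apply_same, Fin.insertNth_apply_succAbove]
    omega

lemma splitUnit_apply_succAbove_self (i : Fin (u + 1)) (j : Fin u) (d : Fin u → ℕ) :
    splitUnit i j d (i.succAbove j) = 1 := by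
  rw [splitUnit, Fin.insertNth_apply_succAbove, update_self]

lemma moranMove_eq_mergeUnit {i : Fin (u + 1)} {j : Fin u} {c : Fin (u + 1) → ℕ}
    (hc : c (i.succAbove j) = 1) :
    moranMove (tupleMultiset c) (c i) (c (i.succAbove j)) = tupleMultiset (mergeUnit i j c) := by
  rw [moranMove, if_pos hc, mergeUnit, tupleMultiset_update, tupleMultiset_removeNth,
    Fin.removeNth_apply]

lemma sum_mergeUnit (i : Fin (u + 1)) (j : Fin u) (F : (Fin u → ℕ) → ℝ) :
    ∑ c ∈ compositions n (u + 1) with c (i.succAbove j) = 1,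
        F (mergeUnit i j c) * (c i * c (i.succAbove j))
      = ∑ d ∈ compositions n u, F d * (d j - 1) := by
  rw [← sum_filter_of_ne (s := compositions n u) (p := fun d => 2 ≤ d j) fun d hd hne => ?_]
  · refine sum_nbij' (mergeUnit i j) (splitUnit i j) (fun c hc => ?_) (fun d hd => ?_)
      (fun c hc => ?_) (fun d hd => ?_) (fun c hc => ?_) <;> simp only [mem_filter] at *
    · refine ⟨mergeUnit_mem_compositions hc.1 hc.2, ?_⟩
      rw [mergeUnit, update_self]
      exact Nat.succ_le_succ ((mem_compositions.1 hc.1).1 i)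
    · exact ⟨splitUnit_mem_compositions hd.1 hd.2, splitUnit_apply_succAbove_self i j d⟩
    · exact splitUnit_mergeUnit hc.2
    · exact mergeUnit_splitUnit (by omega)
    · simp [hc.2, mergeUnit]
  · have := (mem_compositions.1 hd).1 j
    by_contra h
    exact hne (by rw [show d j = 1 by omega]; simp)

end Merges

section Rates

variable {n : ℕ}

def moranRate (m s : Multiset ℕ) : ℝ :=
  (m.map fun a => ((m.erase a).map fun b =>
      if moranMove m a b = s then (a : ℝ) * b else 0).sum).sum
    + if m = s then (m.map fun a : ℕ => (a : ℝ) * ((a : ℝ) - 1)).sum else 0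

lemma moranP_eq (r s : Nat.Partition n) :
    moranP n r s = moranRate r.parts s.parts / (n * (n - 1)) := by
  simp only [moranP, moranRate, Nat.Partition.ext_iff]
  congr 3
  exact congrArg Multiset.sum
    ((congrArg _ (Multiset.bind_singleton r.parts Nat.cast)).trans (Multiset.map_map _ _ _))

variable {u : ℕ}

lemma moranRate_tupleMultiset (c : Fin (u + 1) → ℕ) (S : Multiset ℕ) :
    moranRate (tupleMultiset c) S
      = ∑ i, ∑ j, (if moranMove (tupleMultiset c) (c i) (c (i.succAbove j)) = S
            then (c i : ℝ) * c (i.succAbove j) else 0)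
        + if tupleMultiset c = S then ∑ i, (c i : ℝ) * (c i - 1) else 0 := by
  rw [moranRate, sum_map_tupleMultiset, sum_map_tupleMultiset]
  congr 1
  refine sum_congr rfl fun i _ => ?_
  rw [← tupleMultiset_removeNth, sum_map_tupleMultiset]
  rfl

lemma sum_compositions_move_pair (i : Fin (u + 1)) (j : Fin u) (S : Multiset ℕ) :
    ∑ c ∈ compositions n (u + 1), (if moranMove (tupleMultiset c) (c i) (c (i.succAbove j)) = S
        then (c i : ℝ) * c (i.succAbove j) else 0)
      = ∑ d ∈ compositions n (u + 1), (if tupleMultiset d = S then (1 : ℝ) else 0)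
            * ((d i - 1) * (d (i.succAbove j) + 1))
        + ∑ e ∈ compositions n u, (if tupleMultiset e = S then (1 : ℝ) else 0) * (e j - 1) := by
  have hij : i ≠ i.succAbove j := (Fin.succAbove_ne i j).symm
  rw [← sum_filter_add_sum_filter_not _ fun c => 2 ≤ c (i.succAbove j), ← sum_moveUnit hij,
    ← sum_mergeUnit i j]
  congr 1
  · refine sum_congr rfl fun c hc => ?_
    rw [moranMove_eq_moveUnit hij (by have := (mem_filter.1 hc).2; omega)]
    split_ifs <;> simp
  · rw [filter_congr fun c hc => by
      have := (mem_compositions.1 hc).1 (i.succAbove j)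
      exact show ¬2 ≤ c (i.succAbove j) ↔ c (i.succAbove j) = 1 by omega]
    refine sum_congr rfl fun c hc => ?_
    rw [moranMove_eq_mergeUnit (mem_filter.1 hc).2]
    split_ifs <;> simp

lemma sum_moveUnit_weight_add_hold_weight {d : Fin (u + 1) → ℕ} (hd : d ∈ compositions n (u + 1)) :
    ∑ i, ∑ j, ((d i : ℝ) - 1) * (d (i.succAbove j) + 1) + ∑ i, (d i : ℝ) * (d i - 1)
      = n * (n - 1) - (u + 1) * u := by
  have hsum : ∑ i, (d i : ℝ) = n := by exact_mod_cast (mem_compositions.1 hd).2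
  have hinner (i : Fin (u + 1)) : ∑ j, ((d (i.succAbove j) : ℝ) + 1) = n + u - d i := by
    have h := Fin.sum_univ_succAbove (fun k => (d k : ℝ) + 1) i
    rw [sum_add_distrib, hsum, sum_const, card_univ, Fintype.card_fin] at h
    simp only [nsmul_eq_mul, mul_one, Nat.cast_add, Nat.cast_one] at h
    linarith
  simp only [← mul_sum, hinner, ← sum_add_distrib]
  rw [sum_congr rfl fun i _ => show ((d i : ℝ) - 1) * (n + u - d i) + d i * (d i - 1)
      = (n + u) * d i - (n + u) by ring, sum_sub_distrib, ← mul_sum, hsum, sum_const, card_univ,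
    Fintype.card_fin, nsmul_eq_mul]
  push_cast
  ring

lemma sum_mergeUnit_weight {e : Fin u → ℕ} (he : e ∈ compositions n u) :
    ∑ _i : Fin (u + 1), ∑ j, ((e j : ℝ) - 1) = (u + 1) * (n - u) := by
  have hsum : ∑ j, (e j : ℝ) = n := by exact_mod_cast (mem_compositions.1 he).2
  simp only [sum_sub_distrib, hsum, sum_const, card_univ, Fintype.card_fin, nsmul_eq_mul]
  push_cast
  ring

lemma sum_moranRate_compositions (S : Multiset ℕ) :
    ∑ c ∈ compositions n (u + 1), moranRate (tupleMultiset c) S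
      = (n * (n - 1) - (u + 1) * u) * #{d ∈ compositions n (u + 1) | tupleMultiset d = S}
        + (u + 1) * (n - u) * #{e ∈ compositions n u | tupleMultiset e = S} := by
  let ind {t : ℕ} (d : Fin t → ℕ) : ℝ := if tupleMultiset d = S then 1 else 0
  calc ∑ c ∈ compositions n (u + 1), moranRate (tupleMultiset c) S
      = ∑ d ∈ compositions n (u + 1), ind d
            * (∑ i, ∑ j, ((d i : ℝ) - 1) * (d (i.succAbove j) + 1) + ∑ i, (d i : ℝ) * (d i - 1))
        + ∑ e ∈ compositions n u, ind e * ∑ _i : Fin (u + 1), ∑ j, ((e j : ℝ) - 1) := by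
        have hswap {t : ℕ} (F : Fin (u + 1) → Fin u → (Fin t → ℕ) → ℝ) (s : Finset (Fin t → ℕ)) :
            ∑ i, ∑ j, ∑ d ∈ s, F i j d = ∑ d ∈ s, ∑ i, ∑ j, F i j d := by
          rw [sum_congr rfl fun i _ => sum_comm, sum_comm]
        simp only [moranRate_tupleMultiset, sum_add_distrib]
        rw [← hswap, sum_congr rfl fun i _ => sum_congr rfl fun j _ => sum_compositions_move_pair i j S]
        simp only [sum_add_distrib, hswap, ind, mul_add, mul_sum, boole_mul, sum_ite_irrel,
          sum_const_zero]
        ring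
    _ = ∑ d ∈ compositions n (u + 1), ind d * (n * (n - 1) - (u + 1) * u)
        + ∑ e ∈ compositions n u, ind e * ((u + 1) * (n - u)) := by
        congr 1
        · exact sum_congr rfl fun d hd => by rw [sum_moveUnit_weight_add_hold_weight hd]
        · exact sum_congr rfl fun e he => by rw [sum_mergeUnit_weight he]
    _ = _ := by
        simp only [← sum_mul, ind, sum_boole]
        ring

lemma vecMul_moranP_apply (t : ℕ) (s : Nat.Partition n) :
    (moranMu n t ᵥ* Matrix.of (moranP n)) s
      = (∑ c ∈ compositions n t, moranRate (tupleMultiset c) s.parts)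
          / ((n - 1).choose (t - 1) * (n * (n - 1))) := by
  simp only [vecMul, dotProduct]
  rw [sum_compositions_eq_sum_partitions (fun m => moranRate m s.parts), sum_div]
  refine sum_congr rfl fun r _ => ?_
  rw [of_apply, moranMu_eq_card_div, moranP_eq, nsmul_eq_mul, div_mul_div_comm]

lemma moranMu_vecMul_moranP (hn : 2 ≤ n) {u : ℕ} (hu : u < n) :
    moranMu n (u + 1) ᵥ* Matrix.of (moranP n)
      = moranLam n (u + 1) • moranMu n (u + 1) + (1 - moranLam n (u + 1)) • moranMu n u := by
  funext s
  rw [vecMul_moranP_apply, sum_moranRate_compositions, Pi.add_apply, Pi.smul_apply, Pi.smul_apply,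
    smul_eq_mul, smul_eq_mul, moranMu_eq_card_div, moranMu_eq_card_div, moranLam]
  have hn1 : (n : ℝ) - 1 ≠ 0 := by
    have : (2 : ℝ) ≤ n := by exact_mod_cast hn
    linarith
  have hC : ((n - 1).choose u : ℝ) ≠ 0 := by exact_mod_cast (Nat.choose_pos (by omega)).ne'
  rcases u with _ | w
  · have hempty : compositions n 0 = ∅ := eq_empty_of_forall_notMem fun c hc => by
      have := (mem_compositions.1 hc).2
      simp only [univ_eq_empty, sum_empty] at this
      omega
    rw [hempty, filter_empty, card_empty, Nat.choose_zero_right]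
    push_cast
    field_simp
    ring
  · have hC' : ((n - 1).choose w : ℝ) ≠ 0 := by exact_mod_cast (Nat.choose_pos (by omega)).ne'
    have hchoose : ((n - 1).choose (w + 1) : ℝ) * (w + 1) = (n - 1).choose w * (n - 1 - w) := by
      have h := Nat.choose_succ_right_eq (n - 1) w
      rw [show n - 1 - w = n - (w + 1) by omega] at h
      have h' := congrArg (Nat.cast : ℕ → ℝ) h
      push_cast [Nat.cast_sub (show w + 1 ≤ n by omega)] at h'
      linarith
    push_cast
    field_simp
    linear_combination (-((w : ℝ) + 2) * #{e ∈ compositions n (w + 1) | tupleMultiset e = s.parts})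
      * hchoose

end Rates

end Moran

/-- for the Moran partition chain, `μ_1 P = μ_1` and
`μ_t P = λ_t μ_t + (1−λ_t) μ_{t−1}` for every `2 ≤ t ≤ n`; that is, the chain started at
`(1,…,1)` is intertwined with the pure-death chain `P̂` by the link whose rows are the
`μ_t`. -/
theorem stmt2 (n : ℕ) (hn : 2 ≤ n) :
    moranMu n 1 ᵥ* Matrix.of (moranP n) = moranMu n 1 ∧
    ∀ t : ℕ, 2 ≤ t → t ≤ n →
      moranMu n t ᵥ* Matrix.of (moranP n)
        = moranLam n t • moranMu n t + (1 - moranLam n t) • moranMu n (t - 1) := by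
  refine ⟨by simpa [moranLam] using Moran.moranMu_vecMul_moranP hn (u := 0) (by omega),
    fun t ht htn => ?_⟩
  obtain ⟨u, rfl⟩ := Nat.exists_eq_add_of_le' (by omega : 1 ≤ t)
  exact Moran.moranMu_vecMul_moranP hn (by omega)
end

section
/- For the Moran partition chain on partitions of n, the single-part partition (n) is an absorbing state, and the time to absorption in (n) started from the partition (1,1,…,1) is distributed as Σ_{t=2}^n Y_{n,t}, where Y_{n,2}, …, Y_{n,n} are independent random variables with P(Y_{n,t} = k) = (1−λ_t) λ_t^{k−1} for integers k ≥ 1 (i.e., Y_{n,t} is Geometric with success probability 1−λ_t = t(t−1)/(n(n−1))). Equivalently, for every integer s ≥ 0, (δ_{(1,…,1)} P^s)((n)) = P(Σ_{t=2}^n Y_{n,t} ≤ s). -/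
/-!
For `g_t(r) = ∑_{a ∈ r} C(a, t)`, moving one element from a block of size `b` to one of size `a`
changes `g_{k+1}` by `C(a, k) - C(b - 1, k)`; summing over moves, one step of the chain sends
`g_{k+1}` to `λ_{k+1} g_{k+1} + k(n-k)/(n(n-1)) g_k`. Hence the normalised moments
`u(s, t) = E[g_t(X_s)] / C(n, t)` started from `(1,…,1)` satisfy
`u(s+1, t) = λ_t u(s, t) + (1 - λ_t) u(s, t-1)`, with `u(s, 1) = 1` and `u(0, t) = 0` for `t ≥ 2`.
By the memorylessness of the geometric law, `P(Y_2 + ⋯ + Y_t ≤ s)` satisfies the same recursion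
with the same boundary values, so the two coincide; at `t = n`, `g_n` is the indicator of `(n)`.
-/

open Matrix MeasureTheory ProbabilityTheory

/-- The partition `(1,1,…,1)` of `n`. -/
def onesPartition (n : ℕ) : Nat.Partition n where
  parts := Multiset.replicate n 1
  parts_pos := by
    intro i hi
    rw [Multiset.eq_of_mem_replicate hi]
    norm_num
  parts_sum := by simp

theorem Multiset.sum_map_sum_map_erase_mul_sub {ι R : Type*} [DecidableEq ι] [CommRing R]
    (m : Multiset ι) (w φ χ : ι → R) :
    (m.map fun a => ((m.erase a).map fun b => w a * w b * (φ a - χ b)).sum).sum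
      = (m.map fun a => w a * ((m.map w).sum - w a) * (φ a - χ a)).sum := by
  set W := (m.map w).sum
  set X := (m.map fun b => w b * χ b).sum
  have inner : ∀ a ∈ m, ((m.erase a).map fun b => w a * w b * (φ a - χ b)).sum
      = W * (w a * φ a) - w a * X - (w a * w a * φ a - w a * w a * χ a) := by
    intro a ha
    have hfull : (m.map fun b => w a * w b * (φ a - χ b)).sum = w a * (W * φ a - X) := by
      rw [show (fun b => w a * w b * (φ a - χ b)) = fun b => w a * φ a * w b - w a * (w b * χ b)
        from funext fun b => by ring, Multiset.sum_map_sub, Multiset.sum_map_mul_left,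
        Multiset.sum_map_mul_left]
      ring
    rw [← Multiset.sum_map_erase (f := fun b => w a * w b * (φ a - χ b)) ha] at hfull
    linear_combination hfull
  have outer : ∀ a, w a * (W - w a) * (φ a - χ a)
      = W * (w a * φ a) - W * (w a * χ a) - (w a * w a * φ a - w a * w a * χ a) := by
    intro a; ring
  rw [Multiset.map_congr rfl inner]
  simp only [outer, Multiset.sum_map_sub, Multiset.sum_map_mul_left, Multiset.sum_map_mul_right]
  ring

theorem sum_map_moranMove {M : Type*} [AddCommGroup M] {f : ℕ → M} (hf : f 0 = 0)
    {m : Multiset ℕ} {a b : ℕ} (ha : a ∈ m) (hb : b ∈ m.erase a) :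
    ((moranMove m a b).map f).sum = (m.map f).sum + (f (a + 1) - f a) - (f b - f (b - 1)) := by
  conv_rhs => rw [← Multiset.cons_erase ha, ← Multiset.cons_erase hb]
  unfold moranMove
  split_ifs with hb1
  · subst hb1; simp [hf]; abel
  · simp; abel

theorem sum_moranMove {m : Multiset ℕ} {a b : ℕ} (ha : a ∈ m) (hb : b ∈ m.erase a) (hb0 : 0 < b) :
    (moranMove m a b).sum = m.sum := by
  have := sum_map_moranMove (f := (Nat.cast : ℕ → ℤ)) Nat.cast_zero ha hb
  rw [Nat.cast_sub hb0] at this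
  exact_mod_cast (show ((moranMove m a b).sum : ℤ) = m.sum by push_cast; rw [this]; push_cast; ring)

theorem moranMove_pos {m : Multiset ℕ} (hm : ∀ i ∈ m, 0 < i) (a : ℕ) {b : ℕ} (hb : 0 < b) :
    ∀ i ∈ moranMove m a b, 0 < i := by
  unfold moranMove
  intro i hi
  split_ifs at hi with hb1 <;> simp only [Multiset.mem_cons] at hi
  · rcases hi with rfl | hi
    · omega
    · exact hm i (Multiset.mem_of_mem_erase (Multiset.mem_of_mem_erase hi))
  · rcases hi with rfl | rfl | hi
    · omega
    · omega
    · exact hm i (Multiset.mem_of_mem_erase (Multiset.mem_of_mem_erase hi))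

theorem Nat.Partition.exists_parts_eq_moranMove {n : ℕ} (r : n.Partition) {a b : ℕ}
    (ha : a ∈ r.parts) (hb : b ∈ r.parts.erase a) :
    ∃ s : n.Partition, s.parts = moranMove r.parts a b :=
  have hb0 : 0 < b := r.parts_pos (Multiset.mem_of_mem_erase hb)
  ⟨⟨_, fun hi => moranMove_pos (fun _ => r.parts_pos) a hb0 _ hi,
    by rw [sum_moranMove ha hb hb0, r.parts_sum]⟩, rfl⟩

theorem Nat.Partition.sum_map_cast_parts {n : ℕ} (r : n.Partition) :
    (r.parts.map fun a : ℕ => (a : ℝ)).sum = n :=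
  (Nat.cast_multiset_sum r.parts).symm.trans (congrArg _ r.parts_sum)

theorem sum_moranP_mul {n : ℕ} (r : n.Partition) (F : Multiset ℕ → ℝ) :
    ∑ s, moranP n r s * F s.parts
      = ((r.parts.map fun a => ((r.parts.erase a).map fun b =>
            (a : ℝ) * b * F (moranMove r.parts a b)).sum).sum
          + (r.parts.map fun a : ℕ => (a : ℝ) * (a - 1)).sum * F r.parts) / (n * (n - 1)) := by
  have hmove : ∀ a ∈ r.parts, ∀ b ∈ r.parts.erase a,
      ∑ s : n.Partition, (if moranMove r.parts a b = s.parts then (a : ℝ) * b else 0) * F s.parts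
        = a * b * F (moranMove r.parts a b) := by
    intro a ha b hb
    obtain ⟨s₀, hs₀⟩ := r.exists_parts_eq_moranMove ha hb
    simp_rw [← hs₀, ite_mul, zero_mul, Nat.Partition.ext_iff.symm, eq_comm (a := s₀),
      Finset.sum_ite_eq', Finset.mem_univ, if_true]
  -- the diagonal term of `moranP` maps over `r.parts` coerced to `Multiset ℝ`, i.e. a `bind`
  simp only [moranP, Multiset.pure_def, Multiset.bind_def, Multiset.bind_singleton,
    Multiset.map_map, Function.comp_def, div_mul_eq_mul_div, ← Finset.sum_div, add_mul,
    Finset.sum_add_distrib, ite_mul, zero_mul, Finset.sum_ite_eq, Finset.mem_univ, if_true]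
  congr 2
  simp only [← Multiset.sum_map_mul_right, Finset.sum_eq_multiset_sum]
  rw [Multiset.sum_map_sum_map]
  refine congrArg _ (Multiset.map_congr rfl fun a ha => ?_)
  rw [Multiset.sum_map_sum_map]
  refine congrArg _ (Multiset.map_congr rfl fun b hb => ?_)
  rw [← hmove a ha b hb, Finset.sum_eq_multiset_sum]

theorem sum_moranP_mul_eq_add_div {n : ℕ} (hn : 2 ≤ n) (r : n.Partition) (F : Multiset ℕ → ℝ) :
    ∑ s, moranP n r s * F s.parts
      = F r.parts + (r.parts.map fun a => ((r.parts.erase a).map fun b =>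
            (a : ℝ) * b * (F (moranMove r.parts a b) - F r.parts)).sum).sum / (n * (n - 1)) := by
  have h2n : (2 : ℝ) ≤ n := by exact_mod_cast hn
  have hn0 : (n : ℝ) ≠ 0 := by linarith
  have hn1 : (n : ℝ) - 1 ≠ 0 := by linarith
  have hpairs := Multiset.sum_map_sum_map_erase_mul_sub r.parts (fun a : ℕ => (a : ℝ)) 1 0
  simp only [Pi.one_apply, Pi.zero_apply, sub_zero, mul_one, r.sum_map_cast_parts] at hpairs
  have hdiag : (r.parts.map fun a : ℕ => (a : ℝ) * (n - a)).sum
      + (r.parts.map fun a : ℕ => (a : ℝ) * (a - 1)).sum = n * (n - 1) := by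
    rw [← Multiset.sum_map_add]
    simp only [← mul_add, sub_add_sub_cancel, Multiset.sum_map_mul_right, r.sum_map_cast_parts]
  have hsplit : (r.parts.map fun a => ((r.parts.erase a).map fun b =>
      (a : ℝ) * b * (F (moranMove r.parts a b) - F r.parts)).sum).sum
      = (r.parts.map fun a => ((r.parts.erase a).map fun b =>
          (a : ℝ) * b * F (moranMove r.parts a b)).sum).sum
        - (r.parts.map fun a => ((r.parts.erase a).map fun b : ℕ => (a : ℝ) * b).sum).sum
          * F r.parts := by
    simp only [mul_sub, Multiset.sum_map_sub, Multiset.sum_map_mul_right]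
  rw [sum_moranP_mul, hsplit, hpairs]
  field_simp
  linear_combination F r.parts * hdiag

theorem Nat.cast_sub_mul_choose (a k : ℕ) :
    ((a : ℝ) - k) * a.choose k = (k + 1) * a.choose (k + 1) := by
  rcases le_or_gt k a with hka | hak
  · have h := Nat.choose_succ_right_eq a k
    rw [← Nat.cast_inj (R := ℝ)] at h
    push_cast [Nat.cast_sub hka] at h
    linarith
  · simp [Nat.choose_eq_zero_of_lt hak, Nat.choose_eq_zero_of_lt (hak.trans (Nat.lt_succ_self k))]

theorem Nat.cast_mul_choose_pred {a : ℕ} (ha : 0 < a) (k : ℕ) :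
    (a : ℝ) * (a - 1).choose k = ((a : ℝ) - k) * a.choose k := by
  obtain ⟨a, rfl⟩ := Nat.exists_eq_add_of_lt ha
  simp only [zero_add, Nat.add_sub_cancel]
  have hpascal := Nat.choose_succ_succ' a k
  have hsucc := Nat.cast_sub_mul_choose (a + 1) k
  rw [← Nat.cast_inj (R := ℝ)] at hpascal
  push_cast at hpascal hsucc ⊢
  linear_combination Nat.cast_sub_mul_choose a k - (k + 1) * hpascal - hsucc

theorem sub_mul_mul_choose_sub_choose_pred (n : ℕ) {a : ℕ} (ha : 0 < a) (k : ℕ) :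
    ((n : ℝ) - a) * a * (a.choose k - (a - 1).choose k)
      = k * (n - k) * a.choose k - (k + 1) * k * a.choose (k + 1) := by
  linear_combination (-((n : ℝ) - a)) * Nat.cast_mul_choose_pred ha k
    - k * Nat.cast_sub_mul_choose a k

noncomputable def chooseSum (t : ℕ) (m : Multiset ℕ) : ℝ :=
  (m.map fun a : ℕ => (a.choose t : ℝ)).sum

theorem chooseSum_moranMove (k : ℕ) {m : Multiset ℕ} {a b : ℕ} (ha : a ∈ m) (hb : b ∈ m.erase a)
    (hb0 : 0 < b) :
    chooseSum (k + 1) (moranMove m a b) = chooseSum (k + 1) m + a.choose k - (b - 1).choose k := by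
  obtain ⟨b, rfl⟩ := Nat.exists_eq_add_of_lt hb0
  have hpascal (c : ℕ) : ((c + 1).choose (k + 1) : ℝ) - c.choose (k + 1) = c.choose k := by
    rw [Nat.choose_succ_succ']; push_cast; ring
  rw [chooseSum, chooseSum, sum_map_moranMove (by simp) ha hb, hpascal, zero_add,
    Nat.add_sub_cancel, hpascal]

theorem sum_moranP_mul_chooseSum {n : ℕ} (hn : 2 ≤ n) (r : n.Partition) (k : ℕ) :
    ∑ s, moranP n r s * chooseSum (k + 1) s.parts
      = moranLam n (k + 1) * chooseSum (k + 1) r.parts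
        + k * (n - k) / (n * (n - 1)) * chooseSum k r.parts := by
  have hpos : ∀ a ∈ r.parts, 0 < a := fun _ => r.parts_pos
  have hgen : (r.parts.map fun a => ((r.parts.erase a).map fun b => (a : ℝ) * b *
        (chooseSum (k + 1) (moranMove r.parts a b) - chooseSum (k + 1) r.parts)).sum).sum
      = k * (n - k) * chooseSum k r.parts - (k + 1) * k * chooseSum (k + 1) r.parts :=
    calc _ = (r.parts.map fun a : ℕ => ((r.parts.erase a).map fun b : ℕ =>
            (a : ℝ) * b * ((a.choose k : ℝ) - (b - 1).choose k)).sum).sum := by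
          refine congrArg _ (Multiset.map_congr rfl fun a ha => congrArg _ ?_)
          refine Multiset.map_congr rfl fun b hb => ?_
          rw [chooseSum_moranMove k ha hb (hpos b (Multiset.mem_of_mem_erase hb))]
          ring
      _ = (r.parts.map fun a : ℕ => ((n : ℝ) - a) * a * (a.choose k - (a - 1).choose k)).sum := by
          rw [Multiset.sum_map_sum_map_erase_mul_sub r.parts (fun a : ℕ => (a : ℝ))
            (fun a : ℕ => (a.choose k : ℝ)) (fun b : ℕ => ((b - 1).choose k : ℝ)),
            r.sum_map_cast_parts]
          exact congrArg _ (Multiset.map_congr rfl fun a _ => by ring)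
      _ = (r.parts.map fun a : ℕ =>
            k * (n - k) * (a.choose k : ℝ) - (k + 1) * k * a.choose (k + 1)).sum :=
          congrArg _ (Multiset.map_congr rfl fun a ha =>
            sub_mul_mul_choose_sub_choose_pred n (hpos a ha) k)
      _ = _ := by
          rw [Multiset.sum_map_sub, Multiset.sum_map_mul_left, Multiset.sum_map_mul_left]
          rfl
  rw [sum_moranP_mul_eq_add_div hn, hgen, moranLam]
  push_cast
  ring

theorem Nat.Partition.eq_indiscrete_of_mem {n : ℕ} {r : n.Partition} (h : n ∈ r.parts) :
    r = Nat.Partition.indiscrete n := by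
  have hrest : r.parts.erase n = 0 := by
    have hsum : n + (r.parts.erase n).sum = n := by
      rw [← Multiset.sum_cons, Multiset.cons_erase h, r.parts_sum]
    refine Multiset.eq_zero_of_forall_notMem fun a ha => ?_
    have := Multiset.le_sum_of_mem ha
    have := r.parts_pos (Multiset.mem_of_mem_erase ha)
    omega
  ext1
  rw [Nat.Partition.indiscrete_parts (r.parts_pos h).ne', ← Multiset.cons_erase h, hrest]
  rfl

theorem chooseSum_self_parts {n : ℕ} (hn : 0 < n) (r : n.Partition) :
    chooseSum n r.parts = if r = Nat.Partition.indiscrete n then 1 else 0 := by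
  split_ifs with hr
  · simp [hr, chooseSum, Nat.Partition.indiscrete_parts hn.ne']
  · refine Multiset.sum_eq_zero fun x hx => ?_
    obtain ⟨a, ha, rfl⟩ := Multiset.mem_map.1 hx
    have hle : a ≤ n := r.parts_sum ▸ Multiset.le_sum_of_mem ha
    have hne : a ≠ n := fun h => hr (Nat.Partition.eq_indiscrete_of_mem (h ▸ ha))
    simp [Nat.choose_eq_zero_of_lt (lt_of_le_of_ne hle hne)]

theorem chooseSum_one_parts {n : ℕ} (r : n.Partition) : chooseSum 1 r.parts = n := by
  simp only [chooseSum, Nat.choose_one_right, r.sum_map_cast_parts]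

theorem chooseSum_onesPartition (n k : ℕ) : chooseSum (k + 2) (onesPartition n).parts = 0 := by
  simp [chooseSum, onesPartition, Nat.choose_eq_zero_of_lt]

theorem moranP_indiscrete {n : ℕ} (hn : 2 ≤ n) (s : n.Partition) :
    moranP n (Nat.Partition.indiscrete n) s = if s = Nat.Partition.indiscrete n then 1 else 0 := by
  have hN : (n : ℝ) * (n - 1) ≠ 0 := by
    have : (2 : ℝ) ≤ n := by exact_mod_cast hn
    nlinarith
  rw [moranP, Nat.Partition.indiscrete_parts (by omega)]
  simp only [eq_comm (a := Nat.Partition.indiscrete n)]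
  split_ifs <;> simp [hN]

theorem vecMul_pow_succ_dotProduct_chooseSum {n : ℕ} (hn : 2 ≤ n) (μ : n.Partition → ℝ)
    (s k : ℕ) :
    μ ᵥ* Matrix.of (moranP n) ^ (s + 1) ⬝ᵥ (fun r => chooseSum (k + 1) r.parts)
      = moranLam n (k + 1) * (μ ᵥ* Matrix.of (moranP n) ^ s ⬝ᵥ fun r => chooseSum (k + 1) r.parts)
        + k * (n - k) / (n * (n - 1)) *
          (μ ᵥ* Matrix.of (moranP n) ^ s ⬝ᵥ fun r => chooseSum k r.parts) := by
  have hstep : Matrix.of (moranP n) *ᵥ (fun r => chooseSum (k + 1) r.parts)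
      = moranLam n (k + 1) • (fun r => chooseSum (k + 1) r.parts)
        + (k * (n - k) / (n * (n - 1)) : ℝ) • fun r => chooseSum k r.parts :=
    funext fun r => sum_moranP_mul_chooseSum hn r k
  rw [pow_succ, ← Matrix.vecMul_vecMul, ← Matrix.dotProduct_mulVec, hstep,
    dotProduct_add, dotProduct_smul, dotProduct_smul, smul_eq_mul, smul_eq_mul]

noncomputable def chooseMoment (n : ℕ) (μ : n.Partition → ℝ) (s t : ℕ) : ℝ :=
  (μ ᵥ* Matrix.of (moranP n) ^ s ⬝ᵥ fun r => chooseSum t r.parts) / n.choose t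

theorem chooseMoment_succ {n : ℕ} (hn : 2 ≤ n) (μ : n.Partition → ℝ) (s : ℕ) {k : ℕ}
    (hk : k + 1 ≤ n) :
    chooseMoment n μ (s + 1) (k + 1)
      = moranLam n (k + 1) * chooseMoment n μ s (k + 1)
        + (1 - moranLam n (k + 1)) * chooseMoment n μ s k := by
  have h2n : (2 : ℝ) ≤ n := by exact_mod_cast hn
  have hn0 : (n : ℝ) ≠ 0 := by linarith
  have hn1 : (n : ℝ) - 1 ≠ 0 := by linarith
  have hc0 : (n.choose k : ℝ) ≠ 0 := by exact_mod_cast (Nat.choose_pos (by omega)).ne'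
  have hc1 : (n.choose (k + 1) : ℝ) ≠ 0 := by exact_mod_cast (Nat.choose_pos hk).ne'
  have hpascal := Nat.cast_sub_mul_choose n k
  simp only [chooseMoment, vecMul_pow_succ_dotProduct_chooseSum hn, moranLam]
  push_cast
  field_simp
  linear_combination (k : ℝ) * (μ ᵥ* Matrix.of (moranP n) ^ s ⬝ᵥ fun r => chooseSum k r.parts)
    * hpascal

theorem chooseMoment_one {n : ℕ} (hn : 2 ≤ n) (μ : n.Partition → ℝ) (s : ℕ) :
    chooseMoment n μ s 1 = chooseMoment n μ 0 1 := by
  induction s with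
  | zero => rfl
  | succ s ih =>
    rw [chooseMoment_succ hn μ s (by omega), ih]
    simp [moranLam]

theorem chooseMoment_self {n : ℕ} (hn : 0 < n) (μ : n.Partition → ℝ) (s : ℕ) :
    chooseMoment n μ s n = (μ ᵥ* Matrix.of (moranP n) ^ s) (Nat.Partition.indiscrete n) := by
  simp only [chooseMoment, chooseSum_self_parts hn, Nat.choose_self, Nat.cast_one, div_one]
  simp [dotProduct]

structure SolvesAbsorptionRecurrence (n : ℕ) (c : ℕ → ℝ) (u : ℕ → ℕ → ℝ) : Prop where
  apply_one : ∀ s, u s 1 = 1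
  zero_apply : ∀ k, 1 ≤ k → k + 1 ≤ n → u 0 (k + 1) = 0
  succ_apply : ∀ s k, 1 ≤ k → k + 1 ≤ n →
    u (s + 1) (k + 1) = c (k + 1) * u s (k + 1) + (1 - c (k + 1)) * u s k

theorem SolvesAbsorptionRecurrence.unique {n : ℕ} {c : ℕ → ℝ} {u v : ℕ → ℕ → ℝ}
    (hu : SolvesAbsorptionRecurrence n c u) (hv : SolvesAbsorptionRecurrence n c v) :
    ∀ s t, 1 ≤ t → t ≤ n → u s t = v s t := by
  intro s
  induction s with
  | zero =>
    rintro (_ | _ | k) ht1 htn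
    · omega
    · rw [hu.apply_one, hv.apply_one]
    · rw [hu.zero_apply (k + 1) (by omega) htn, hv.zero_apply (k + 1) (by omega) htn]
  | succ s ih =>
    rintro (_ | _ | k) ht1 htn
    · omega
    · rw [hu.apply_one, hv.apply_one]
    · rw [hu.succ_apply s (k + 1) (by omega) htn, hv.succ_apply s (k + 1) (by omega) htn,
        ih (k + 2) (by omega) htn, ih (k + 1) (by omega) (by omega)]

theorem solvesAbsorptionRecurrence_chooseMoment {n : ℕ} (hn : 2 ≤ n) :
    SolvesAbsorptionRecurrence n (moranLam n)
      (chooseMoment n (Pi.single (onesPartition n) 1)) where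
  apply_one s := by
    have hn0 : (n : ℝ) ≠ 0 := by exact_mod_cast (show n ≠ 0 by omega)
    rw [chooseMoment_one hn]
    simp [chooseMoment, chooseSum_one_parts, hn0]
  zero_apply k hk _ := by
    obtain ⟨j, rfl⟩ := Nat.exists_eq_add_of_le' hk
    simp [chooseMoment, chooseSum_onesPartition]
  succ_apply s _ _ hk := chooseMoment_succ hn _ s hk

theorem moranLam_nonneg {n t : ℕ} (ht : t ≤ n) : 0 ≤ moranLam n t := by
  have hn : 0 ≤ (n : ℝ) * (n - 1) := by
    rcases Nat.eq_zero_or_pos n with rfl | hn0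
    · simp
    · have : (1 : ℝ) ≤ n := by exact_mod_cast hn0
      nlinarith
  have htn : (t : ℝ) * (t - 1) ≤ n * (n - 1) := by
    rcases Nat.eq_zero_or_pos t with rfl | ht0
    · simpa using hn
    · have : (1 : ℝ) ≤ t := by exact_mod_cast ht0
      have : (t : ℝ) ≤ n := by exact_mod_cast ht
      nlinarith
  rw [moranLam, sub_nonneg]
  exact div_le_one_of_le₀ htn hn

theorem moranLam_lt_one {n t : ℕ} (ht2 : 2 ≤ t) (ht : t ≤ n) : moranLam n t < 1 := by
  have h2t : (2 : ℝ) ≤ t := by exact_mod_cast ht2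
  have h2n : (2 : ℝ) ≤ n := by exact_mod_cast ht2.trans ht
  rw [moranLam, sub_lt_self_iff]
  exact div_pos (by nlinarith) (by nlinarith)

theorem sum_range_geometric_conv_succ {q : ℝ} {p : ℕ → ℝ} (hp0 : p 0 = 0)
    (hp : ∀ k, p (k + 1) = (1 - q) * q ^ k) (v : ℕ → ℝ) (s : ℕ) :
    ∑ k ∈ Finset.range (s + 1 + 1), p k * v (s + 1 - k)
      = q * ∑ k ∈ Finset.range (s + 1), p k * v (s - k) + (1 - q) * v s := by
  rw [Finset.sum_range_succ', Finset.sum_range_succ',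
    Finset.sum_range_succ' (fun k => p k * v (s - k))]
  simp only [hp, hp0, Nat.add_sub_add_right, Nat.sub_zero, pow_zero, mul_one, zero_mul,
    add_zero, Finset.mul_sum, pow_succ]
  rw [add_left_inj]
  refine Finset.sum_congr rfl fun k _ => ?_
  rw [show s - (k + 1) = s - k - 1 by omega]
  ring

section Probability

variable {Ω : Type*} [MeasurableSpace Ω] {μ : Measure Ω}

theorem measure_eq_zero_of_measureReal_eq_geometric [IsProbabilityMeasure μ] {Y : Ω → ℕ}
    (hY : Measurable Y) {q : ℝ} (hq0 : 0 ≤ q) (hq1 : q < 1)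
    (hgeo : ∀ k, 1 ≤ k → μ.real {ω | Y ω = k} = (1 - q) * q ^ (k - 1)) :
    μ {ω | Y ω = 0} = 0 := by
  have htotal : ∑' k, μ {ω | Y ω = k} = 1 := by
    have h := tsum_measure_preimage_singleton Set.countable_univ (f := Y) (μ := μ)
      fun k _ => hY (measurableSet_singleton k)
    rwa [tsum_univ (f := fun k => μ (Y ⁻¹' {k})), Set.preimage_univ, measure_univ] at h
  have htail : ∑' k, μ {ω | Y ω = k + 1} = 1 := by
    have hterm (k : ℕ) : μ {ω | Y ω = k + 1} = ENNReal.ofReal ((1 - q) * q ^ k) := by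
      have h := hgeo (k + 1) le_add_self
      rw [Nat.add_sub_cancel] at h
      rw [← h, measureReal_def, ENNReal.ofReal_toReal (measure_ne_top _ _)]
    simp only [hterm]
    rw [← ENNReal.ofReal_tsum_of_nonneg (fun k => by have := sub_nonneg.2 hq1.le; positivity)
      ((summable_geometric_of_lt_one hq0 hq1).mul_left _), tsum_mul_left,
      tsum_geometric_of_lt_one hq0 hq1, mul_inv_cancel₀ (sub_ne_zero.2 hq1.ne'), ENNReal.ofReal_one]
  rw [tsum_eq_zero_add' ENNReal.summable, htail] at htotal
  exact (ENNReal.add_left_inj ENNReal.one_ne_top).1 (htotal.trans (zero_add 1).symm)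

theorem measureReal_add_le_eq_sum [IsFiniteMeasure μ] {X Z : Ω → ℕ} (hX : Measurable X)
    (hZ : Measurable Z) (hXZ : IndepFun X Z μ) (s : ℕ) :
    μ.real {ω | X ω + Z ω ≤ s}
      = ∑ k ∈ Finset.range (s + 1), μ.real {ω | X ω = k} * μ.real {ω | Z ω ≤ s - k} := by
  have hsplit : {ω | X ω + Z ω ≤ s}
      = ⋃ k ∈ Finset.range (s + 1), X ⁻¹' {k} ∩ Z ⁻¹' Set.Iic (s - k) := by
    ext ω
    simp only [Set.mem_ofPred_eq, Set.mem_iUnion, Set.mem_inter_iff, Set.mem_preimage,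
      Set.mem_singleton_iff, Set.mem_Iic, Finset.mem_range]
    constructor
    · intro h; refine ⟨X ω, ?_, rfl, ?_⟩ <;> omega
    · rintro ⟨k, hk, rfl, h⟩; omega
  rw [hsplit, measureReal_biUnion_finset]
  · refine Finset.sum_congr rfl fun k _ => ?_
    simp only [measureReal_def,
      hXZ.measure_inter_preimage_eq_mul _ _ (measurableSet_singleton k) measurableSet_Iic,
      ENNReal.toReal_mul]
    rfl
  · intro k _ l _ hkl
    exact Set.disjoint_left.2 fun ω h h' => hkl (h.1.symm.trans h'.1)
  · exact fun k _ => (hX (measurableSet_singleton k)).inter (hZ measurableSet_Iic)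

theorem measureReal_sum_Icc_succ_le_eq_sum [IsFiniteMeasure μ] {Y : ℕ → Ω → ℕ}
    (hY : ∀ t, Measurable (Y t)) (hind : iIndepFun Y μ) {a k : ℕ} (hak : a ≤ k + 1) (s : ℕ) :
    μ.real {ω | ∑ u ∈ Finset.Icc a (k + 1), Y u ω ≤ s}
      = ∑ j ∈ Finset.range (s + 1),
          μ.real {ω | Y (k + 1) ω = j} * μ.real {ω | ∑ u ∈ Finset.Icc a k, Y u ω ≤ s - j} := by
  have hindep : IndepFun (Y (k + 1)) (fun ω => ∑ u ∈ Finset.Icc a k, Y u ω) μ := by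
    simpa only [← Finset.sum_apply] using (hind.indepFun_finsetSum_of_notMem hY (by simp)).symm
  simpa only [Finset.sum_Icc_succ_top hak, add_comm] using
    measureReal_add_le_eq_sum (hY (k + 1)) (Finset.measurable_sum _ fun u _ => hY u) hindep s

theorem solvesAbsorptionRecurrence_measureReal_sum_Icc_le [IsProbabilityMeasure μ]
    {n : ℕ} {c : ℕ → ℝ} (hc0 : ∀ t, 2 ≤ t → t ≤ n → 0 ≤ c t) (hc1 : ∀ t, 2 ≤ t → t ≤ n → c t < 1)
    {Y : ℕ → Ω → ℕ} (hY : ∀ t, Measurable (Y t)) (hind : iIndepFun Y μ)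
    (hgeo : ∀ t, 2 ≤ t → t ≤ n → ∀ k, 1 ≤ k →
      μ.real {ω | Y t ω = k} = (1 - c t) * c t ^ (k - 1)) :
    SolvesAbsorptionRecurrence n c fun s t => μ.real {ω | ∑ u ∈ Finset.Icc 2 t, Y u ω ≤ s} := by
  have hp0 : ∀ k, 1 ≤ k → k + 1 ≤ n → μ.real {ω | Y (k + 1) ω = 0} = 0 := fun k hk hkn => by
    rw [measureReal_def, measure_eq_zero_of_measureReal_eq_geometric (hY (k + 1))
      (hc0 _ (by omega) hkn) (hc1 _ (by omega) hkn) (hgeo _ (by omega) hkn), ENNReal.toReal_zero]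
  refine ⟨fun s => by simp, fun k hk hkn => ?_, fun s k hk hkn => ?_⟩
  · rw [measureReal_sum_Icc_succ_le_eq_sum hY hind (by omega : 2 ≤ k + 1)]
    simp [hp0 k hk hkn]
  · rw [measureReal_sum_Icc_succ_le_eq_sum hY hind (by omega : 2 ≤ k + 1),
      measureReal_sum_Icc_succ_le_eq_sum hY hind (by omega : 2 ≤ k + 1)]
    refine sum_range_geometric_conv_succ (p := fun j => μ.real {ω | Y (k + 1) ω = j})
      (hp0 k hk hkn) (fun j => ?_) (fun j => μ.real {ω | ∑ u ∈ Finset.Icc 2 k, Y u ω ≤ j}) s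
    rw [hgeo _ (by omega) hkn _ (by omega), Nat.add_sub_cancel]

end Probability

/-- the single-part partition `(n)` is absorbing for the Moran partition
chain, and the time to absorption in `(n)` started from `(1,…,1)` is distributed as
`Σ_{t=2}^n Y_{n,t}` where the `Y_{n,t}` are independent Geometric random variables with
success probabilities `1 − λ_t = t(t−1)/(n(n−1))` supported on `{1,2,…}`. -/
theorem stmt3 (n : ℕ) (hn : 2 ≤ n)
    {Ω : Type*} [MeasureSpace Ω] [IsProbabilityMeasure (ℙ : Measure Ω)]
    (Y : ℕ → Ω → ℕ) (hY_meas : ∀ t, Measurable (Y t))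
    (hY_indep : iIndepFun Y ℙ)
    (hY_dist : ∀ t, 2 ≤ t → t ≤ n → ∀ k : ℕ, 1 ≤ k →
      (ℙ {ω | Y t ω = k}).toReal = (1 - moranLam n t) * moranLam n t ^ (k - 1)) :
    (∀ s : Nat.Partition n,
      Matrix.of (moranP n) (Nat.Partition.indiscrete n) s
        = if s = Nat.Partition.indiscrete n then 1 else 0) ∧
    ∀ s : ℕ,
      (((fun r : Nat.Partition n => if r = onesPartition n then (1 : ℝ) else 0)
          ᵥ* Matrix.of (moranP n) ^ s) (Nat.Partition.indiscrete n))
        = (ℙ {ω | ∑ t ∈ Finset.Icc 2 n, Y t ω ≤ s}).toReal := by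
  refine ⟨moranP_indiscrete hn, fun s => ?_⟩
  have hinit : (fun r : Nat.Partition n => if r = onesPartition n then (1 : ℝ) else 0)
      = Pi.single (onesPartition n) 1 := funext fun r => (Pi.single_apply _ _ r).symm
  have hcdf := solvesAbsorptionRecurrence_measureReal_sum_Icc_le
    (fun t _ htn => moranLam_nonneg htn) (fun t ht2 htn => moranLam_lt_one ht2 htn)
    hY_meas hY_indep hY_dist
  rw [hinit, ← chooseMoment_self (by omega),
    (solvesAbsorptionRecurrence_chooseMoment hn).unique hcdf s n (by omega) le_rfl]
  rfl
end

section
/- For every 0 ≤ k ≤ r: π*_k(i) > 0 for all 0 ≤ i ≤ k, and Σ_{i=0}^k π*_k(i) = 1. In particular each π*_k is a probability distribution on {0,1,…,r} supported on {0,…,k}. -/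
/-!
Put `Fⱼ(x) = ρⱼ + (1 - ρⱼ)(1 - γⱼ)/(x - γⱼ) = (1 - γⱼ - ρⱼ(1 - x))/(x - γⱼ)`. For distinct poles
`γ₁, …, γₖ` the partial fraction expansion of `∏ⱼ Fⱼ(x)` has constant term `∏ⱼ ρⱼ = π*ₖ(0)` and
residue `(1 - γᵢ) π*ₖ(i)` at `γᵢ`. Since `Fⱼ(1) = 1`, evaluating the expansion at `x = 1` gives
`∑ᵢ π*ₖ(i) = 1`. For positivity, the numerator of the `j`-th factor of `π*ₖ(i)` is
`ρⱼ (γᵢ - λⱼ)`, and interlacing puts `λⱼ` and `γⱼ` on the same side of `γᵢ`.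
-/

/-- `ρ_i = (1−γ_i)/(1−λ_i)`. -/
noncomputable def rho (γ lam : ℕ → ℝ) (i : ℕ) : ℝ := (1 - γ i) / (1 - lam i)

/-- The row vector `π*_k ∈ ℝ^{r+1}`: `π*_k(0) = ∏_{j=1}^k ρ_j`,
`π*_k(i) = (1−ρ_i) ∏_{1≤j≤k, j≠i} (1−γ_j−ρ_j(1−γ_i))/(γ_i−γ_j)` for `1 ≤ i ≤ k`,
and `π*_k(i) = 0` for `i > k`. -/
noncomputable def pistar (γ lam : ℕ → ℝ) (k i : ℕ) : ℝ :=
  if i = 0 then ∏ j ∈ Finset.Icc 1 k, rho γ lam j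
  else if i ≤ k then
    (1 - rho γ lam i) *
      ∏ j ∈ (Finset.Icc 1 k).erase i, ((1 - γ j - rho γ lam j * (1 - γ i)) / (γ i - γ j))
  else 0

open Finset

theorem mul_div_sub_eq_add {K : Type*} [Field K] {c g h x : K} (a b : K) (hxg : x ≠ g)
    (hxh : x ≠ h) (hgh : g ≠ h) :
    (a + b / (x - g)) * (c / (x - h)) =
      b * (c / (g - h)) / (x - g) + (a + b / (h - g)) * c / (x - h) := by
  have := sub_ne_zero.2 hxg
  have := sub_ne_zero.2 hxh
  have := sub_ne_zero.2 hgh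
  have := sub_ne_zero.2 hgh.symm
  field_simp
  ring

theorem prod_add_div_sub_eq {ι K : Type*} [Field K] [DecidableEq ι] (a b g : ι → K)
    {s : Finset ι} (hg : Set.InjOn g s) {x : K} (hx : ∀ j ∈ s, x ≠ g j) :
    ∏ j ∈ s, (a j + b j / (x - g j)) =
      ∏ j ∈ s, a j + ∑ i ∈ s, b i * (∏ j ∈ s.erase i, (a j + b j / (g i - g j))) / (x - g i) := by
  induction s using Finset.induction_on generalizing x with
  | empty => simp
  | insert m s hm ih =>
    have hgs : Set.InjOn g s := hg.mono (by simp)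
    have hgm : ∀ j ∈ s, g m ≠ g j := fun j hj h =>
      hm (hg (mem_insert_self m s) (mem_insert_of_mem hj) h ▸ hj)
    have hxm : x ≠ g m := hx m (mem_insert_self m s)
    have hxs : ∀ j ∈ s, x ≠ g j := fun j hj => hx j (mem_insert_of_mem hj)
    have hterm : ∀ i ∈ s, (a m + b m / (x - g m)) *
        (b i * (∏ j ∈ s.erase i, (a j + b j / (g i - g j))) / (x - g i)) =
        b m * (b i * (∏ j ∈ s.erase i, (a j + b j / (g i - g j))) / (g m - g i)) / (x - g m) +
          b i * (∏ j ∈ (insert m s).erase i, (a j + b j / (g i - g j))) / (x - g i) := by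
      intro i hi
      have him : i ≠ m := fun h => hm (h ▸ hi)
      rw [erase_insert_of_ne him.symm, prod_insert (fun h => hm (mem_of_mem_erase h)),
        mul_div_sub_eq_add _ _ hxm (hxs i hi) (hgm i hi)]
      ring
    rw [prod_insert hm, prod_insert hm, sum_insert hm, erase_insert hm, ih hgs hxs, ih hgs hgm,
      mul_add, mul_sum, sum_congr rfl hterm, sum_add_distrib, ← sum_div, ← mul_sum]
    ring

theorem add_one_sub_mul_div_sub_eq {K : Type*} [Field K] (ρ g x : K) (hxg : x ≠ g) :
    ρ + (1 - ρ) * (1 - g) / (x - g) = (1 - g - ρ * (1 - x)) / (x - g) := by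
  have := sub_ne_zero.2 hxg
  field_simp
  ring

theorem one_sub_sub_rho_mul {γ lam : ℕ → ℝ} {j : ℕ} (hj : lam j ≠ 1) (x : ℝ) :
    1 - γ j - rho γ lam j * (1 - x) = rho γ lam j * (x - lam j) := by
  have : 1 - lam j ≠ 0 := sub_ne_zero.2 hj.symm
  unfold rho
  field_simp
  ring

def StrictlyInterlaced (r : ℕ) (γ lam : ℕ → ℝ) : Prop :=
  ∀ i : ℕ, 1 ≤ i → i ≤ r → lam (i - 1) > γ i ∧ γ i > lam i

namespace StrictlyInterlaced

variable {r : ℕ} {γ lam : ℕ → ℝ}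

theorem lam_le (h : StrictlyInterlaced r γ lam) {a b : ℕ} (hab : a ≤ b) (hb : b ≤ r) :
    lam b ≤ lam a := by
  induction b, hab using Nat.le_induction with
  | base => rfl
  | succ n _ ih =>
    have := h (n + 1) (by omega) hb
    simp only [Nat.add_sub_cancel] at this
    linarith [ih (by omega)]

theorem gam_lt_lam (h : StrictlyInterlaced r γ lam) {i j : ℕ} (hij : i < j) (hj : j ≤ r) :
    γ j < lam i :=
  (h j (by omega) hj).1.trans_le (h.lam_le (by omega) (by omega))

theorem gam_lt_gam (h : StrictlyInterlaced r γ lam) {i j : ℕ} (hi : 1 ≤ i) (hij : i < j)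
    (hj : j ≤ r) : γ j < γ i :=
  (h.gam_lt_lam hij hj).trans (h i hi (by omega)).2

theorem gam_lt_one (h : StrictlyInterlaced r γ lam) (h0 : lam 0 = 1) {i : ℕ} (hi : 1 ≤ i)
    (hir : i ≤ r) : γ i < 1 :=
  h0 ▸ h.gam_lt_lam hi hir

theorem rho_pos (h : StrictlyInterlaced r γ lam) (h0 : lam 0 = 1) {i : ℕ} (hi : 1 ≤ i)
    (hir : i ≤ r) : 0 < rho γ lam i := by
  have := h.gam_lt_one h0 hi hir
  have := (h i hi hir).2
  exact div_pos (by linarith) (by linarith)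

theorem rho_lt_one (h : StrictlyInterlaced r γ lam) (h0 : lam 0 = 1) {i : ℕ} (hi : 1 ≤ i)
    (hir : i ≤ r) : rho γ lam i < 1 := by
  have := h.gam_lt_one h0 hi hir
  have := (h i hi hir).2
  exact (div_lt_one (by linarith)).2 (by linarith)

theorem pistar_factor_pos (h : StrictlyInterlaced r γ lam) (h0 : lam 0 = 1) {i j : ℕ}
    (hi : 1 ≤ i) (hir : i ≤ r) (hj : 1 ≤ j) (hjr : j ≤ r) (hij : i ≠ j) :
    0 < (1 - γ j - rho γ lam j * (1 - γ i)) / (γ i - γ j) := by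
  have hlj := (h j hj hjr).2
  rw [one_sub_sub_rho_mul (by linarith [h.gam_lt_one h0 hj hjr]), mul_div_assoc]
  refine mul_pos (h.rho_pos h0 hj hjr) ?_
  rcases hij.lt_or_gt with hij | hji
  · have := h.gam_lt_lam hij hjr
    have := (h i hi hir).2
    exact div_pos (by linarith) (by linarith)
  · have := h.gam_lt_lam hji hir
    exact div_pos_of_neg_of_neg (by linarith) (by linarith)

theorem pistar_pos (h : StrictlyInterlaced r γ lam) (h0 : lam 0 = 1) {k i : ℕ} (hk : k ≤ r)
    (hi : i ≤ k) : 0 < pistar γ lam k i := by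
  unfold pistar
  split_ifs with hi0
  · exact prod_pos fun j hj => h.rho_pos h0 (mem_Icc.1 hj).1 ((mem_Icc.1 hj).2.trans hk)
  · refine mul_pos (sub_pos.2 (h.rho_lt_one h0 (by omega) (by omega))) (prod_pos ?_)
    intro j hj
    obtain ⟨hji, hj1, hjk⟩ := mem_erase.1 hj |>.imp_right mem_Icc.1
    exact h.pistar_factor_pos h0 (by omega) (by omega) hj1 (by omega) hji.symm

theorem sum_pistar_eq_one (h : StrictlyInterlaced r γ lam) (h0 : lam 0 = 1) {k : ℕ}
    (hk : k ≤ r) : ∑ i ∈ range (k + 1), pistar γ lam k i = 1 := by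
  have hγ : ∀ j ∈ Icc 1 k, γ j < 1 := fun j hj =>
    h.gam_lt_one h0 (mem_Icc.1 hj).1 ((mem_Icc.1 hj).2.trans hk)
  have hinj : Set.InjOn γ (Icc 1 k) := StrictAntiOn.injOn fun i hi j hj hij =>
    h.gam_lt_gam (mem_Icc.1 hi).1 hij ((mem_Icc.1 hj).2.trans hk)
  have key := prod_add_div_sub_eq (rho γ lam) (fun j => (1 - rho γ lam j) * (1 - γ j)) γ hinj
    (x := 1) fun j hj => (hγ j hj).ne'
  rw [prod_eq_one fun j hj => by
    rw [mul_div_assoc, div_self (sub_ne_zero.2 (hγ j hj).ne')]; ring] at key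
  rw [range_eq_Ico, sum_eq_sum_Ico_succ_bot (by omega), zero_add, Ico_add_one_right_eq_Icc,
    key]
  congr 1
  refine sum_congr rfl fun i hi => ?_
  obtain ⟨hi1, hik⟩ := mem_Icc.1 hi
  have hne : ∀ j ∈ (Icc 1 k).erase i, γ i ≠ γ j := fun j hj =>
    hinj.ne hi (mem_of_mem_erase hj) (ne_of_mem_erase hj).symm
  rw [pistar, if_neg (by omega), if_pos hik,
    prod_congr rfl fun j hj => add_one_sub_mul_div_sub_eq _ _ _ (hne j hj),
    mul_right_comm, mul_div_cancel_right₀ _ (sub_ne_zero.2 (hγ i hi).ne')]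

end StrictlyInterlaced

theorem stmt7_general (r : ℕ) (γ lam : ℕ → ℝ)
    (hlam0 : lam 0 = 1)
    (hinter : ∀ i : ℕ, 1 ≤ i → i ≤ r → lam (i - 1) > γ i ∧ γ i > lam i) :
    ∀ k : ℕ, k ≤ r →
      (∀ i : ℕ, i ≤ k → 0 < pistar γ lam k i) ∧
      (∑ i ∈ Finset.range (k + 1), pistar γ lam k i = 1) ∧
      (∀ i : ℕ, k < i → pistar γ lam k i = 0) := by
  intro k hk
  refine ⟨fun i hi => StrictlyInterlaced.pistar_pos hinter hlam0 hk hi,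
    StrictlyInterlaced.sum_pistar_eq_one hinter hlam0 hk, fun i hi => ?_⟩
  rw [pistar, if_neg (by omega), if_neg (by omega)]

/-- for every `0 ≤ k ≤ r`, `π*_k(i) > 0` for all `0 ≤ i ≤ k` and
`Σ_{i=0}^k π*_k(i) = 1`; in particular `π*_k` is a probability distribution on
`{0,…,r}` supported on `{0,…,k}`. -/
theorem stmt7 (r : ℕ) (hr : 1 ≤ r) (γ lam : ℕ → ℝ)
    (hlam0 : lam 0 = 1)
    (hinter : ∀ i : ℕ, 1 ≤ i → i ≤ r → lam (i - 1) > γ i ∧ γ i > lam i)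
    (hlamr : 0 ≤ lam r) :
    ∀ k : ℕ, k ≤ r →
      (∀ i : ℕ, i ≤ k → 0 < pistar γ lam k i) ∧
      (∑ i ∈ Finset.range (k + 1), pistar γ lam k i = 1) ∧
      (∀ i : ℕ, k < i → pistar γ lam k i = 0) :=
  stmt7_general r γ lam hlam0 hinter
end

section
/- For the Markov chain on {0,1,…,r} with initial distribution π̂ and transition matrix P̂, state 0 is absorbing and the hitting time of state 0 has the same distribution as Σ_{i=1}^r Y_i; equivalently, for every integer t ≥ 0, (π̂ P̂^t)(0) = P(Σ_{i=1}^r Y_i ≤ t). -/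
open Matrix MeasureTheory ProbabilityTheory

/-- The row vector `π̂_k ∈ ℝ^{r+1}`: `π̂_k(0) = ∏_{i=1}^k ρ_i`,
`π̂_k(j) = ρ_k⋯ρ_{j+1}(1−ρ_j)` for `1 ≤ j < k`, `π̂_k(k) = 1−ρ_k` (for `k ≥ 1`),
and `π̂_k(j) = 0` for `j > k`; `π̂_0 = δ_0`. -/
noncomputable def pihat (γ lam : ℕ → ℝ) (k j : ℕ) : ℝ :=
  if j = 0 then ∏ i ∈ Finset.Icc 1 k, rho γ lam i
  else if j < k then (∏ i ∈ Finset.Icc (j + 1) k, rho γ lam i) * (1 - rho γ lam j)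
  else if j = k then 1 - rho γ lam k
  else 0

/-- The dual transition matrix `P̂`: `P̂(0,0) = 1`, and for `i = 1,…,r`: `P̂(i,i) = γ_i`,
`P̂(i,j) = (1−γ_i) π̂_{i−1}(j)` for `0 ≤ j < i`, and `P̂(i,j) = 0` for `j > i`. -/
noncomputable def PhatM (r : ℕ) (γ lam : ℕ → ℝ) : Matrix (Fin (r + 1)) (Fin (r + 1)) ℝ :=
  Matrix.of fun i j =>
    if i.val = 0 then (if j.val = 0 then 1 else 0)
    else if j = i then γ i.val
    else if j.val < i.val then (1 - γ i.val) * pihat γ lam (i.val - 1) j.val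
    else 0

/-! Induct on `k`, proving `(π̂_k P̂^t)(0) = P(Y_1 + ⋯ + Y_k ≤ t)` for every `t`. Row `k+1` of `P̂`
is `γ_{k+1} δ_{k+1} + (1 - γ_{k+1}) π̂_k`, so the chain started at `k+1` stays there for a
Geometric(1 - γ_{k+1}) time and then restarts from `π̂_k`. Since
`π̂_{k+1} = ρ_{k+1} π̂_k + (1 - ρ_{k+1}) δ_{k+1}`, the absorption time from `π̂_{k+1}` is that from
`π̂_k` plus an independent copy of `Y_{k+1}`. -/

open Finset

section VecMulPow

variable {n R : Type*} [Fintype n] [DecidableEq n] [CommSemiring R]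

theorem vecMul_pow_eq_self {P : Matrix n n R} {v : n → R} (h : v ᵥ* P = v) (t : ℕ) :
    v ᵥ* P ^ t = v := by
  induction t with
  | zero => simp
  | succ t ih => rw [pow_succ, ← vecMul_vecMul, ih, h]

theorem single_one_vecMul_pow {P : Matrix n n R} {i : n} {c : R} {w : n → R}
    (hP : P i = c • Pi.single i 1 + w) (t : ℕ) :
    Pi.single i 1 ᵥ* P ^ t
      = c ^ t • Pi.single i 1 + ∑ v ∈ range t, c ^ v • (w ᵥ* P ^ (t - (v + 1))) := by
  induction t with
  | zero => simp
  | succ t ih =>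
    rw [pow_succ', ← vecMul_vecMul, single_one_vecMul, row, hP, add_vecMul, smul_vecMul, ih,
      sum_range_succ']
    simp only [Nat.add_sub_add_right, Nat.add_sub_cancel, smul_add, smul_sum, smul_smul,
      ← pow_succ', pow_zero, one_smul]
    abel

end VecMulPow

namespace ProbabilityTheory

variable {Ω : Type*} [MeasurableSpace Ω] {μ : Measure Ω} [IsFiniteMeasure μ]

theorem IndepFun.measureReal_add_le {X Z : Ω → ℕ} (hX : Measurable X) (hZ : Measurable Z)
    (hXZ : IndepFun X Z μ) (t : ℕ) :
    μ.real {ω | X ω + Z ω ≤ t}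
      = ∑ u ∈ range (t + 1), μ.real {ω | Z ω = u} * μ.real {ω | X ω ≤ t - u} := by
  have hsplit : {ω | X ω + Z ω ≤ t}
      = ⋃ u ∈ range (t + 1), Z ⁻¹' {u} ∩ X ⁻¹' Set.Iic (t - u) := by
    ext ω
    simp only [Set.mem_ofPred_eq, Set.mem_iUnion, Set.mem_inter_iff, mem_range,
      Set.mem_preimage, Set.mem_singleton_iff, Set.mem_Iic, exists_prop]
    exact ⟨fun h => ⟨Z ω, by omega, rfl, by omega⟩, fun ⟨_, _, hu, hle⟩ => by omega⟩
  have hdisj : (range (t + 1) : Set ℕ).PairwiseDisjoint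
      fun u => Z ⁻¹' {u} ∩ X ⁻¹' Set.Iic (t - u) :=
    fun u _ v _ huv => Set.disjoint_left.2 fun ω h1 h2 => huv (h1.1.symm.trans h2.1)
  rw [hsplit, measureReal_biUnion_finset hdisj
    fun u _ => (hZ (measurableSet_singleton u)).inter (hX measurableSet_Iic)]
  refine sum_congr rfl fun u _ => ?_
  simp only [measureReal_def, hXZ.symm.measure_inter_preimage_eq_mul _ _
    (measurableSet_singleton u) measurableSet_Iic, ENNReal.toReal_mul]
  rfl

theorem iIndepFun.measureReal_sum_Icc_succ_le {Y : ℕ → Ω → ℕ} (hY : ∀ i, Measurable (Y i))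
    (hind : iIndepFun Y μ) (k t : ℕ) :
    μ.real {ω | ∑ i ∈ Icc 1 (k + 1), Y i ω ≤ t}
      = ∑ u ∈ range (t + 1),
          μ.real {ω | Y (k + 1) ω = u} * μ.real {ω | ∑ i ∈ Icc 1 k, Y i ω ≤ t - u} := by
  have hindep : IndepFun (fun ω => ∑ i ∈ Icc 1 k, Y i ω) (Y (k + 1)) μ := by
    simpa only [Finset.sum_fn] using
      hind.indepFun_finsetSum_of_notMem hY (show k + 1 ∉ Icc 1 k by simp)
  simp_rw [sum_Icc_succ_top (show 1 ≤ k + 1 by omega)]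
  exact hindep.measureReal_add_le (Finset.measurable_sum _ fun i _ => hY i) (hY _) t

end ProbabilityTheory

section DualChain

variable {γ lam : ℕ → ℝ}

theorem pihat_of_lt {k j : ℕ} (h : k < j) : pihat γ lam k j = 0 := by
  simp [pihat, h.ne', h.not_gt, (k.zero_le.trans_lt h).ne']

theorem pihat_zero (j : ℕ) : pihat γ lam 0 j = if j = 0 then 1 else 0 := by
  split_ifs with hj <;> simp [pihat, hj]

theorem pihat_succ (k j : ℕ) :
    pihat γ lam (k + 1) j
      = rho γ lam (k + 1) * pihat γ lam k j
        + (1 - rho γ lam (k + 1)) * if j = k + 1 then 1 else 0 := by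
  unfold pihat
  split_ifs <;> first | omega | simp_all [prod_Icc_succ_top] <;> ring

noncomputable def pihatVec (r : ℕ) (γ lam : ℕ → ℝ) (k : ℕ) : Fin (r + 1) → ℝ :=
  fun j => pihat γ lam k j

variable {r : ℕ}

theorem pihatVec_zero : pihatVec r γ lam 0 = Pi.single 0 1 := by
  ext j
  simp only [pihatVec, pihat_zero, Pi.single_apply, Fin.ext_iff, Fin.val_zero]

theorem pihatVec_succ {k : ℕ} (hk : k < r) :
    pihatVec r γ lam (k + 1)
      = rho γ lam (k + 1) • pihatVec r γ lam k
        + (1 - rho γ lam (k + 1)) • Pi.single ⟨k + 1, by omega⟩ 1 := by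
  ext j
  simp [pihatVec, pihat_succ, Pi.single_apply, Fin.ext_iff]

theorem PhatM_zero_row : PhatM r γ lam 0 = Pi.single 0 1 := by
  ext j
  simp only [PhatM, of_apply, Pi.single_apply, Fin.ext_iff, Fin.val_zero, if_true]

theorem PhatM_succ_row {k : ℕ} (hk : k < r) :
    PhatM r γ lam ⟨k + 1, by omega⟩
      = γ (k + 1) • Pi.single ⟨k + 1, by omega⟩ 1 + (1 - γ (k + 1)) • pihatVec r γ lam k := by
  ext j
  simp only [PhatM, pihatVec, of_apply, Pi.add_apply, Pi.smul_apply, Pi.single_apply, Fin.ext_iff,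
    smul_eq_mul]
  split_ifs <;> first | omega | simp_all [pihat_of_lt]

theorem pihatVec_vecMul_PhatM_pow_apply_zero {Ω : Type*} [MeasurableSpace Ω] {μ : Measure Ω}
    [IsProbabilityMeasure μ] {Y : ℕ → Ω → ℕ}
    (hY_meas : ∀ i, Measurable (Y i)) (hY_indep : iIndepFun Y μ)
    (hY_zero : ∀ i : ℕ, 1 ≤ i → i ≤ r → μ.real {ω | Y i ω = 0} = rho γ lam i)
    (hY_pos : ∀ i : ℕ, 1 ≤ i → i ≤ r → ∀ k : ℕ, 1 ≤ k →
      μ.real {ω | Y i ω = k} = (1 - rho γ lam i) * (1 - γ i) * γ i ^ (k - 1))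
    {k : ℕ} (hk : k ≤ r) (t : ℕ) :
    (pihatVec r γ lam k ᵥ* PhatM r γ lam ^ t) 0 = μ.real {ω | ∑ i ∈ Icc 1 k, Y i ω ≤ t} := by
  induction k generalizing t with
  | zero =>
    have habsorb : Pi.single 0 1 ᵥ* PhatM r γ lam = Pi.single 0 1 := by
      rw [single_one_vecMul, row, PhatM_zero_row]
    simp [pihatVec_zero, vecMul_pow_eq_self habsorb]
  | succ k ih =>
    have hkr : k < r := hk
    have hrestart : (Pi.single ⟨k + 1, by omega⟩ 1 ᵥ* PhatM r γ lam ^ t) 0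
        = ∑ v ∈ range t,
            γ (k + 1) ^ v * ((1 - γ (k + 1)) * μ.real {ω | ∑ i ∈ Icc 1 k, Y i ω ≤ t - (v + 1)}) := by
      rw [single_one_vecMul_pow (PhatM_succ_row hkr)]
      simp [Fin.ext_iff, Finset.sum_apply, smul_vecMul, ih hkr.le]
    rw [pihatVec_succ hkr, add_vecMul, smul_vecMul, smul_vecMul, Pi.add_apply, Pi.smul_apply,
      Pi.smul_apply, smul_eq_mul, smul_eq_mul, hrestart, ih hkr.le,
      hY_indep.measureReal_sum_Icc_succ_le hY_meas, sum_range_succ',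
      hY_zero (k + 1) (Nat.le_add_left 1 k) hk, Nat.sub_zero, mul_sum, add_comm]
    congr 1
    refine sum_congr rfl fun v _ => ?_
    rw [hY_pos (k + 1) (Nat.le_add_left 1 k) hk (v + 1) (Nat.le_add_left 1 v), Nat.add_sub_cancel]
    ring

end DualChain

theorem stmt10_general (r : ℕ) (γ lam : ℕ → ℝ)
    {Ω : Type*} [MeasureSpace Ω] [IsProbabilityMeasure (ℙ : Measure Ω)]
    (Y : ℕ → Ω → ℕ) (hY_meas : ∀ i, Measurable (Y i))
    (hY_indep : iIndepFun Y ℙ)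
    (hY_zero : ∀ i : ℕ, 1 ≤ i → i ≤ r → (ℙ {ω | Y i ω = 0}).toReal = rho γ lam i)
    (hY_pos : ∀ i : ℕ, 1 ≤ i → i ≤ r → ∀ k : ℕ, 1 ≤ k →
      (ℙ {ω | Y i ω = k}).toReal = (1 - rho γ lam i) * (1 - γ i) * γ i ^ (k - 1)) :
    (∀ j : Fin (r + 1), PhatM r γ lam 0 j = if j = 0 then 1 else 0) ∧
    ∀ t : ℕ,
      (((fun i : Fin (r + 1) => pihat γ lam r i.val) ᵥ* PhatM r γ lam ^ t) 0)
        = (ℙ {ω | ∑ i ∈ Finset.Icc 1 r, Y i ω ≤ t}).toReal :=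
  ⟨fun j => by rw [PhatM_zero_row, Pi.single_apply],
    pihatVec_vecMul_PhatM_pow_apply_zero hY_meas hY_indep hY_zero hY_pos le_rfl⟩

/-- for the Markov chain on `{0,1,…,r}` with initial distribution `π̂` and
transition matrix `P̂`, state `0` is absorbing and the hitting time of `0` is distributed
as `Σ_{i=1}^r Y_i`, where the `Y_i` are independent with the modified Geometric
distributions `ρ_i δ_0 + (1−ρ_i) Geometric(1−γ_i)`. -/
theorem stmt10 (r : ℕ) (hr : 1 ≤ r) (γ lam : ℕ → ℝ)
    (hlam0 : lam 0 = 1)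
    (hinter : ∀ i : ℕ, 1 ≤ i → i ≤ r → lam (i - 1) > γ i ∧ γ i > lam i)
    (hlamr : 0 ≤ lam r)
    {Ω : Type*} [MeasureSpace Ω] [IsProbabilityMeasure (ℙ : Measure Ω)]
    (Y : ℕ → Ω → ℕ) (hY_meas : ∀ i, Measurable (Y i))
    (hY_indep : iIndepFun Y ℙ)
    (hY_zero : ∀ i : ℕ, 1 ≤ i → i ≤ r → (ℙ {ω | Y i ω = 0}).toReal = rho γ lam i)
    (hY_pos : ∀ i : ℕ, 1 ≤ i → i ≤ r → ∀ k : ℕ, 1 ≤ k →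
      (ℙ {ω | Y i ω = k}).toReal = (1 - rho γ lam i) * (1 - γ i) * γ i ^ (k - 1)) :
    (∀ j : Fin (r + 1), PhatM r γ lam 0 j = if j = 0 then 1 else 0) ∧
    ∀ t : ℕ,
      (((fun i : Fin (r + 1) => pihat γ lam r i.val) ᵥ* PhatM r γ lam ^ t) 0)
        = (ℙ {ω | ∑ i ∈ Finset.Icc 1 r, Y i ω ≤ t}).toReal :=
  stmt10_general r γ lam Y hY_meas hY_indep hY_zero hY_pos
end

section
/- Suppose P^{i−1}(0,0) ≠ π(0) and P^i(0,0) ≠ π(0). Then μ_i P = q_i π + (1−q_i) μ_{i+1}. Moreover, if in addition P^t(0,0) is nonincreasing in t and P^i(0,0) > π(0), then q_i ∈ [0,1). -/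
/-!
Writing `a = P^{i-1}(0,0)` and `r = P^{i-1}(0,:)`, the vector `μ_i` is `(a π - π(0) r) / (a - π(0))`
on all coordinates (the numerator vanishes at `0`). Stationarity turns `μ_i P` into
`(a π - π(0) r P) / (a - π(0))` with `r P = P^i(0,:)`, and the identity is then linear algebra
once one notes `1 - q_i = (P^i(0,0) - π(0)) / (a - π(0))`. Under monotonicity
`π(0) < P^i(0,0) ≤ a`, so `q_i = (a - P^i(0,0)) / (a - π(0)) ∈ [0,1)`.
-/

open Matrix

/-- The row vector `μ_i = ( 0 | [P^{i−1}(0,0) π_{−0} − π(0) P^{i−1}(0,:)_{−0}] /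
(P^{i−1}(0,0) − π(0)) )`. -/
noncomputable def muRow {n : ℕ} (P : Matrix (Fin (n + 1)) (Fin (n + 1)) ℝ)
    (π : Fin (n + 1) → ℝ) (i : ℕ) : Fin (n + 1) → ℝ := fun j =>
  if j = 0 then 0
  else ((P ^ (i - 1)) 0 0 * π j - π 0 * (P ^ (i - 1)) 0 j) / ((P ^ (i - 1)) 0 0 - π 0)

/-- The scalar `q_i = (P^{i−1}(0,0) − P^{i}(0,0)) / (P^{i−1}(0,0) − π(0))`. -/
noncomputable def qScal {n : ℕ} (P : Matrix (Fin (n + 1)) (Fin (n + 1)) ℝ)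
    (π : Fin (n + 1) → ℝ) (i : ℕ) : ℝ :=
  ((P ^ (i - 1)) 0 0 - (P ^ i) 0 0) / ((P ^ (i - 1)) 0 0 - π 0)

section

variable {n : ℕ} (P : Matrix (Fin (n + 1)) (Fin (n + 1)) ℝ) (π : Fin (n + 1) → ℝ)

theorem muRow_eq_smul (i : ℕ) :
    muRow P π i = ((P ^ (i - 1)) 0 0 - π 0)⁻¹ •
      ((P ^ (i - 1)) 0 0 • π - π 0 • (P ^ (i - 1)) 0) := by
  ext j
  by_cases hj : j = 0
  · simp [muRow, hj, mul_comm]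
  · simp [muRow, hj, div_eq_inv_mul]

theorem muRow_vecMul (hπ : π ᵥ* P = π) {i : ℕ} (hi : 1 ≤ i) :
    muRow P π i ᵥ* P = ((P ^ (i - 1)) 0 0 - π 0)⁻¹ •
      ((P ^ (i - 1)) 0 0 • π - π 0 • (P ^ i) 0) := by
  have hrow : (P ^ (i - 1)) 0 ᵥ* P = (P ^ i) 0 := by
    rw [← mul_apply_eq_vecMul, ← pow_succ, Nat.sub_add_cancel hi]
  rw [muRow_eq_smul, smul_vecMul, sub_vecMul, smul_vecMul, smul_vecMul, hπ, hrow]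

theorem one_sub_qScal {i : ℕ} (h : (P ^ (i - 1)) 0 0 ≠ π 0) :
    1 - qScal P π i = ((P ^ i) 0 0 - π 0) / ((P ^ (i - 1)) 0 0 - π 0) := by
  rw [qScal, one_sub_div (sub_ne_zero.mpr h)]
  ring_nf

theorem qScal_mem_Ico {i : ℕ} (hmono : (P ^ i) 0 0 ≤ (P ^ (i - 1)) 0 0)
    (hπ : π 0 < (P ^ i) 0 0) : 0 ≤ qScal P π i ∧ qScal P π i < 1 := by
  have hpos : 0 < (P ^ (i - 1)) 0 0 - π 0 := by linarith
  exact ⟨div_nonneg (by linarith) hpos.le, (div_lt_one hpos).mpr (by linarith)⟩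

end

theorem stmt16_general {n : ℕ}
    (P : Matrix (Fin (n + 1)) (Fin (n + 1)) ℝ)
    (π : Fin (n + 1) → ℝ)
    (hπ_stat : π ᵥ* P = π)
    (i : ℕ) (hi : 1 ≤ i)
    (h1 : (P ^ (i - 1)) 0 0 ≠ π 0) (h2 : (P ^ i) 0 0 ≠ π 0) :
    (muRow P π i ᵥ* P = qScal P π i • π + (1 - qScal P π i) • muRow P π (i + 1)) ∧
    ((∀ t : ℕ, (P ^ (t + 1)) 0 0 ≤ (P ^ t) 0 0) → π 0 < (P ^ i) 0 0 →
      0 ≤ qScal P π i ∧ qScal P π i < 1) := by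
  constructor
  · have hscale : ((P ^ i) 0 0 - π 0) / ((P ^ (i - 1)) 0 0 - π 0) * ((P ^ i) 0 0 - π 0)⁻¹ =
        ((P ^ (i - 1)) 0 0 - π 0)⁻¹ := by
      field_simp [sub_ne_zero.mpr h2]
    rw [muRow_vecMul P π hπ_stat hi, muRow_eq_smul P π (i + 1), Nat.add_sub_cancel,
      one_sub_qScal P π h1, smul_smul, hscale, qScal]
    module
  · intro hmono hπ
    refine qScal_mem_Ico P π ?_ hπ
    simpa only [Nat.sub_add_cancel hi] using hmono (i - 1)

/-- if `P^{i−1}(0,0) ≠ π(0)` and `P^{i}(0,0) ≠ π(0)` then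
`μ_i P = q_i π + (1−q_i) μ_{i+1}`; if moreover `P^t(0,0)` is nonincreasing in `t` and
`P^{i}(0,0) > π(0)`, then `q_i ∈ [0,1)`. -/
theorem stmt16 {n : ℕ} (hn : 1 ≤ n)
    (P : Matrix (Fin (n + 1)) (Fin (n + 1)) ℝ)
    (hP_nonneg : ∀ i j, 0 ≤ P i j) (hP_row : ∀ i, ∑ j, P i j = 1)
    (hprim : ∃ t : ℕ, ∀ i j, 0 < (P ^ t) i j)
    (π : Fin (n + 1) → ℝ) (hπ_nonneg : ∀ i, 0 ≤ π i) (hπ_sum : ∑ i, π i = 1)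
    (hπ_stat : π ᵥ* P = π)
    (i : ℕ) (hi : 1 ≤ i)
    (h1 : (P ^ (i - 1)) 0 0 ≠ π 0) (h2 : (P ^ i) 0 0 ≠ π 0) :
    (muRow P π i ᵥ* P = qScal P π i • π + (1 - qScal P π i) • muRow P π (i + 1)) ∧
    ((∀ t : ℕ, (P ^ (t + 1)) 0 0 ≤ (P ^ t) 0 0) → π 0 < (P ^ i) 0 0 →
      0 ≤ qScal P π i ∧ qScal P π i < 1) :=
  stmt16_general P π hπ_stat i hi h1 h2
end

section
/- Assume P^t(0,0) > π(0) for every t ≥ 0 and P^t(0,0) is nonincreasing in t. Then: every row of Λ sums to 1; π = π̂₀ Λ; Λ P_abs = P̂ Λ; and Λ(0,0) = 1 while Λ(i,0) = 0 for all i ≥ 1. Consequently, for every integer t ≥ 0, (π P_abs^t)(0) = (π̂₀ P̂^t)(0); i.e., the hitting time of state 0 for the chain P started in stationarity π has the same distribution as the hitting time of state 0 for the chain (π̂₀, P̂). -/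
/-!
For `i = m + 1` the row `μ_i` is `(a_m π - π(0) P^m(0,·)) / (a_m - π(0))` with `a_m = P^m(0,0)`,
an affine combination of `π` and the `m`-step law from `0` that vanishes at state `0`. So
`μ_i P_abs = μ_i P`, and stationarity turns `P^m(0,·)` into `P^(m+1)(0,·)` while fixing `π`.
Since `1 - q_i = (a_{m+1} - π(0)) / (a_m - π(0))` and `(1 - π(0)) μ_1 = π - π(0) δ_0`, the result
is exactly `π(0) q_i δ_0 + (1 - π(0)) q_i μ_1 + (1 - q_i) μ_{i+1}`, i.e. `Λ P_abs = P̂ Λ`.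
Iterating from `π = π̂₀ Λ` gives `π P_abs^t = π̂₀ P̂^t Λ`, and column `0` of `Λ` is `δ_0`.
-/

open Matrix

/-- The initial distribution `π̂₀ = π(0) δ_0 + (1−π(0)) δ_1` of the dual chain on `ℕ`. -/
noncomputable def pihat0 {n : ℕ} (π : Fin (n + 1) → ℝ) : ℕ → ℝ := fun i =>
  if i = 0 then π 0 else if i = 1 then 1 - π 0 else 0

/-- The dual transition kernel `P̂` on `ℕ`: `P̂(0,0) = 1` and, for `i ≥ 1`,
`P̂(i,0) = π(0) q_i`, `P̂(i,1) = (1−π(0)) q_i`, `P̂(i,i+1) = 1−q_i`, other entries 0. -/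
noncomputable def PhatInf {n : ℕ} (P : Matrix (Fin (n + 1)) (Fin (n + 1)) ℝ)
    (π : Fin (n + 1) → ℝ) : ℕ → ℕ → ℝ := fun i j =>
  if i = 0 then (if j = 0 then 1 else 0)
  else if j = 0 then π 0 * qScal P π i
  else if j = 1 then (1 - π 0) * qScal P π i
  else if j = i + 1 then 1 - qScal P π i
  else 0

/-- The distribution `π̂₀ P̂^t` of the dual chain at time `t`. -/
noncomputable def dualDist {n : ℕ} (P : Matrix (Fin (n + 1)) (Fin (n + 1)) ℝ)
    (π : Fin (n + 1) → ℝ) : ℕ → ℕ → ℝ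
  | 0 => pihat0 π
  | (t + 1) => fun j => ∑' i : ℕ, dualDist P π t i * PhatInf P π i j

/-- The link `Λ` with rows indexed by `ℕ`: `Λ(0,:) = δ_0` and `Λ(i,:) = μ_i` for `i ≥ 1`. -/
noncomputable def LambdaInf {n : ℕ} (P : Matrix (Fin (n + 1)) (Fin (n + 1)) ℝ)
    (π : Fin (n + 1) → ℝ) : ℕ → Fin (n + 1) → ℝ := fun i =>
  if i = 0 then (fun j => if j = 0 then 1 else 0) else muRow P π i

open Finset

section General

variable {ι R : Type*} [Fintype ι] [DecidableEq ι]

theorem Matrix.sum_pow_apply_eq_one [Semiring R] {A : Matrix ι ι R}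
    (hA : ∀ i, ∑ j, A i j = 1) (m : ℕ) (i : ι) : ∑ j, (A ^ m) i j = 1 := by
  induction m generalizing i with
  | zero => simp [one_apply]
  | succ m ih =>
    simp_rw [pow_succ, mul_apply]
    rw [sum_comm]
    simp_rw [← mul_sum, hA, mul_one, ih]

theorem Matrix.vecMul_updateRow_of_apply_eq_zero [Semiring R] {v : ι → R} {i : ι}
    (hv : v i = 0) (A : Matrix ι ι R) (r : ι → R) : v ᵥ* updateRow A i r = v ᵥ* A := by
  ext j
  refine sum_congr rfl fun k _ => ?_
  by_cases hk : k = i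
  · simp [hk, hv]
  · simp [updateRow_ne hk]

end General

section DualChain

variable {n : ℕ} (P : Matrix (Fin (n + 1)) (Fin (n + 1)) ℝ) (π : Fin (n + 1) → ℝ)

abbrev absorbAtZero : Matrix (Fin (n + 1)) (Fin (n + 1)) ℝ :=
  updateRow P 0 (fun l => if l = 0 then 1 else 0)

theorem LambdaInf_zero : LambdaInf P π 0 = (1 : Matrix (Fin (n + 1)) (Fin (n + 1)) ℝ) 0 := by
  ext j
  simp [LambdaInf, one_apply, eq_comm]

theorem LambdaInf_apply_zero {i : ℕ} (hi : i ≠ 0) : LambdaInf P π i 0 = 0 := by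
  simp [LambdaInf, hi, muRow]

-- Valid also at column `0`, where the numerator vanishes.
theorem LambdaInf_succ (m : ℕ) :
    LambdaInf P π (m + 1) = ((P ^ m) 0 0 - π 0)⁻¹ • ((P ^ m) 0 0 • π - π 0 • (P ^ m) 0) := by
  ext j
  by_cases hj : j = 0
  · subst hj
    simp [LambdaInf, muRow, mul_comm]
  · simp [LambdaInf, muRow, hj, div_eq_inv_mul]

theorem sum_LambdaInf (hπ : ∑ j, π j = 1) (hP : ∀ i, ∑ j, P i j = 1)
    (hne : ∀ m : ℕ, (P ^ m) 0 0 ≠ π 0) (i : ℕ) : ∑ j, LambdaInf P π i j = 1 := by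
  cases i with
  | zero => simp [LambdaInf_zero, one_apply]
  | succ m =>
    have hd : (P ^ m) 0 0 - π 0 ≠ 0 := sub_ne_zero.2 (hne m)
    simp only [LambdaInf_succ, Pi.smul_apply, Pi.sub_apply, smul_eq_mul, ← mul_sum,
      sum_sub_distrib, hπ, Matrix.sum_pow_apply_eq_one hP, mul_one]
    exact inv_mul_cancel₀ hd

theorem LambdaInf_succ_vecMul (hπP : π ᵥ* P = π) (m : ℕ) :
    LambdaInf P π (m + 1) ᵥ* absorbAtZero P =
      ((P ^ m) 0 0 - π 0)⁻¹ • ((P ^ m) 0 0 • π - π 0 • (P ^ (m + 1)) 0) := by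
  rw [absorbAtZero, vecMul_updateRow_of_apply_eq_zero (LambdaInf_apply_zero P π m.succ_ne_zero),
    LambdaInf_succ, smul_vecMul, sub_vecMul, smul_vecMul, smul_vecMul, hπP,
    ← mul_apply_eq_vecMul, ← pow_succ]

theorem PhatInf_eq_zero {i k : ℕ} (hk : i + 2 ≤ k) : PhatInf P π i k = 0 := by
  simp [PhatInf, show k ≠ 0 by omega, show k ≠ 1 by omega, show k ≠ i + 1 by omega]

theorem tsum_PhatInf_mul_zero (v : ℕ → ℝ) : ∑' k, PhatInf P π 0 k * v k = v 0 := by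
  rw [tsum_eq_single 0 fun k hk => by simp [PhatInf, hk]]
  simp [PhatInf]

theorem tsum_PhatInf_mul_succ (m : ℕ) (v : ℕ → ℝ) :
    ∑' k, PhatInf P π (m + 1) k * v k =
      π 0 * qScal P π (m + 1) * v 0 + (1 - π 0) * qScal P π (m + 1) * v 1
        + (1 - qScal P π (m + 1)) * v (m + 2) := by
  rw [tsum_eq_sum (s := {0, 1, m + 2}) fun k hk => by simp_all [PhatInf],
    sum_insert (by simp), sum_insert (by simp), sum_singleton]
  simp [PhatInf, add_assoc]

theorem LambdaInf_vecMul_absorbAtZero (hπP : π ᵥ* P = π)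
    (hne : ∀ m : ℕ, (P ^ m) 0 0 ≠ π 0) (i : ℕ) (j : Fin (n + 1)) :
    (LambdaInf P π i ᵥ* absorbAtZero P) j = ∑' k, PhatInf P π i k * LambdaInf P π k j := by
  cases i with
  | zero =>
    rw [tsum_PhatInf_mul_zero, LambdaInf_zero, ← mul_apply_eq_vecMul, one_mul]
    simp [one_apply, eq_comm]
  | succ m =>
    rw [tsum_PhatInf_mul_succ, LambdaInf_succ_vecMul P π hπP, LambdaInf_zero, LambdaInf_succ,
      LambdaInf_succ, qScal]
    have h0 := sub_ne_zero.2 (hne 0)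
    have hm := sub_ne_zero.2 (hne m)
    have hm1 := sub_ne_zero.2 (hne (m + 1))
    simp only [pow_zero, one_apply_eq, Nat.add_sub_cancel, Pi.smul_apply, Pi.sub_apply,
      smul_eq_mul] at h0 ⊢
    field_simp
    ring

theorem dualDist_eq_zero {t k : ℕ} (hk : t + 2 ≤ k) : dualDist P π t k = 0 := by
  induction t generalizing k with
  | zero => simp [dualDist, pihat0, show k ≠ 0 by omega, show k ≠ 1 by omega]
  | succ t ih =>
    refine (tsum_congr fun i => ?_).trans tsum_zero
    by_cases hi : t + 2 ≤ i
    · rw [ih hi, zero_mul]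
    · rw [PhatInf_eq_zero P π (by omega : i + 2 ≤ k), mul_zero]

theorem dualDist_succ_apply (t k : ℕ) :
    dualDist P π (t + 1) k = ∑ i ∈ range (t + 2), dualDist P π t i * PhatInf P π i k :=
  tsum_eq_sum fun i hi => by rw [dualDist_eq_zero P π (by simpa using hi), zero_mul]

theorem sum_pihat0_mul_LambdaInf (hπ0 : π 0 ≠ 1) (j : Fin (n + 1)) :
    ∑ i ∈ range 2, pihat0 π i * LambdaInf P π i j = π j := by
  have hd : (1 : ℝ) - π 0 ≠ 0 := sub_ne_zero.2 hπ0.symm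
  simp only [sum_range_succ, sum_range_zero, pihat0, LambdaInf_zero, LambdaInf_succ, pow_zero,
    one_apply_eq, Pi.smul_apply, Pi.sub_apply, smul_eq_mul, if_pos, one_ne_zero, if_false]
  field_simp
  ring

theorem vecMul_absorbAtZero_pow (hπP : π ᵥ* P = π) (hne : ∀ m : ℕ, (P ^ m) 0 0 ≠ π 0)
    (t : ℕ) :
    π ᵥ* absorbAtZero P ^ t = ∑ k ∈ range (t + 2), dualDist P π t k • LambdaInf P π k := by
  induction t with
  | zero =>
    have hπ0 : π 0 ≠ 1 := Ne.symm (by simpa using hne 0)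
    ext j
    simpa [Finset.sum_apply, dualDist] using (sum_pihat0_mul_LambdaInf P π hπ0 j).symm
  | succ t ih =>
    have step : ∀ k ∈ range (t + 2), LambdaInf P π k ᵥ* absorbAtZero P =
        ∑ l ∈ range (t + 3), PhatInf P π k l • LambdaInf P π l := by
      intro k hk
      ext j
      rw [LambdaInf_vecMul_absorbAtZero P π hπP hne, tsum_eq_sum (s := range (t + 3)) ?_]
      · simp [Finset.sum_apply]
      · intro l hl
        rw [PhatInf_eq_zero P π (by simp at hk hl; omega), zero_mul]
    calc π ᵥ* absorbAtZero P ^ (t + 1)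
        = ∑ k ∈ range (t + 2), dualDist P π t k • (LambdaInf P π k ᵥ* absorbAtZero P) := by
          rw [pow_succ, ← vecMul_vecMul, ih, sum_vecMul]
          simp_rw [smul_vecMul]
      _ = ∑ k ∈ range (t + 2), ∑ l ∈ range (t + 3),
            (dualDist P π t k * PhatInf P π k l) • LambdaInf P π l := by
          refine sum_congr rfl fun k hk => ?_
          simp_rw [step k hk, smul_sum, smul_smul]
      _ = _ := by
          rw [sum_comm]
          simp_rw [← sum_smul, dualDist_succ_apply]

theorem vecMul_absorbAtZero_pow_apply_zero (hπP : π ᵥ* P = π)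
    (hne : ∀ m : ℕ, (P ^ m) 0 0 ≠ π 0) (t : ℕ) :
    (π ᵥ* absorbAtZero P ^ t) 0 = dualDist P π t 0 := by
  rw [vecMul_absorbAtZero_pow P π hπP hne, Finset.sum_apply,
    sum_eq_single_of_mem 0 (by simp) fun k _ hk => by simp [LambdaInf_apply_zero P π hk]]
  simp [LambdaInf]

end DualChain

theorem stmt17_general {n : ℕ}
    (P : Matrix (Fin (n + 1)) (Fin (n + 1)) ℝ)
    (hP_row : ∀ i, ∑ j, P i j = 1)
    (π : Fin (n + 1) → ℝ) (hπ_sum : ∑ i, π i = 1)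
    (hπ_stat : π ᵥ* P = π)
    (hpos : ∀ t : ℕ, π 0 < (P ^ t) 0 0) :
    (∀ i : ℕ, ∑ j, LambdaInf P π i j = 1) ∧
    (∀ j : Fin (n + 1), π j = ∑' i : ℕ, pihat0 π i * LambdaInf P π i j) ∧
    (∀ (i : ℕ) (j : Fin (n + 1)),
      (∑ k, LambdaInf P π i k * Matrix.updateRow P 0 (fun l => if l = 0 then 1 else 0) k j)
        = ∑' k : ℕ, PhatInf P π i k * LambdaInf P π k j) ∧
    (LambdaInf P π 0 0 = 1 ∧ ∀ i : ℕ, 1 ≤ i → LambdaInf P π i 0 = 0) ∧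
    (∀ t : ℕ,
      ((π ᵥ* Matrix.updateRow P 0 (fun l => if l = 0 then 1 else 0) ^ t) 0)
        = dualDist P π t 0) := by
  have hne : ∀ m : ℕ, (P ^ m) 0 0 ≠ π 0 := fun m => (hpos m).ne'
  have hπ0 : π 0 ≠ 1 := by simpa using (hpos 0).ne
  refine ⟨sum_LambdaInf P π hπ_sum hP_row hne, fun j => ?_,
    LambdaInf_vecMul_absorbAtZero P π hπ_stat hne,
    ⟨by simp [LambdaInf], fun i hi => LambdaInf_apply_zero P π (by omega)⟩,
    vecMul_absorbAtZero_pow_apply_zero P π hπ_stat hne⟩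
  rw [tsum_eq_sum (s := range 2), sum_pihat0_mul_LambdaInf P π hπ0]
  intro i hi
  simp only [mem_range, not_lt] at hi
  simp [pihat0, show i ≠ 0 by omega, show i ≠ 1 by omega]

/-- under `P^t(0,0) > π(0)` for all `t` and `P^t(0,0)` nonincreasing, the
matrix `Λ` is a quasi-link: its rows sum to 1, `π = π̂₀ Λ`, `Λ P_abs = P̂ Λ`, and the 0th
column of `Λ` is `δ_0ᵀ`; consequently the hitting time of state 0 for the chain `P`
started in stationarity has the same distribution as the hitting time of state 0 of the
dual chain `(π̂₀, P̂)`. -/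
theorem stmt17 {n : ℕ} (hn : 1 ≤ n)
    (P : Matrix (Fin (n + 1)) (Fin (n + 1)) ℝ)
    (hP_nonneg : ∀ i j, 0 ≤ P i j) (hP_row : ∀ i, ∑ j, P i j = 1)
    (hprim : ∃ t : ℕ, ∀ i j, 0 < (P ^ t) i j)
    (π : Fin (n + 1) → ℝ) (hπ_nonneg : ∀ i, 0 ≤ π i) (hπ_sum : ∑ i, π i = 1)
    (hπ_stat : π ᵥ* P = π)
    (hpos : ∀ t : ℕ, π 0 < (P ^ t) 0 0)
    (hmono : ∀ t : ℕ, (P ^ (t + 1)) 0 0 ≤ (P ^ t) 0 0) :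
    (∀ i : ℕ, ∑ j, LambdaInf P π i j = 1) ∧
    (∀ j : Fin (n + 1), π j = ∑' i : ℕ, pihat0 π i * LambdaInf P π i j) ∧
    (∀ (i : ℕ) (j : Fin (n + 1)),
      (∑ k, LambdaInf P π i k * Matrix.updateRow P 0 (fun l => if l = 0 then 1 else 0) k j)
        = ∑' k : ℕ, PhatInf P π i k * LambdaInf P π k j) ∧
    (LambdaInf P π 0 0 = 1 ∧ ∀ i : ℕ, 1 ≤ i → LambdaInf P π i 0 = 0) ∧
    (∀ t : ℕ,
      ((π ᵥ* Matrix.updateRow P 0 (fun l => if l = 0 then 1 else 0) ^ t) 0)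
        = dualDist P π t 0) :=
  stmt17_general P hP_row π hπ_sum hπ_stat hpos
end

section
/- (Brown's representation, discrete time, without reversibility.) Let P be an irreducible aperiodic stochastic matrix on {0,1,…,n} with stationary distribution π, and assume P^t(0,0) is nonincreasing in t. Let N, V₁, V₂, … be independent random variables with P(N = k) = π(0)(1−π(0))^k for k ∈ ℕ, and with the V_i i.i.d. ℕ-valued satisfying P(V_i > t) = (P^t(0,0) − π(0))/(1 − π(0)) for every t ∈ ℕ. Then the hitting time of state 0 for the chain P started in π has the same distribution as Σ_{i=1}^N V_i; equivalently, for every integer t ≥ 0, (π P_abs^t)(0) = P(Σ_{i=1}^N V_i ≤ t). -/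
/-!
Both sides satisfy the same renewal equation with kernel `a t = P^t(0,0)`. Splitting `π P^m` at
the first visit to `0` gives `π 0 = ∑_{s ≤ m} P_π(T₀ = s) a(m - s)`. On the other side write
`a t = π 0 + (1 - π 0) P(V > t)`; conditioning on `N = k` and on the partial sum `W_k`, the sum
`∑_{s ≤ m} P(∑_{i<N} V_i = s) a(m - s)` telescopes in `k` to `π 0`, because
`∑_s P(W_k = s) P(V_k > m - s) = P(W_k ≤ m) - P(W_{k+1} ≤ m)`. Since `a 0 = 1`, the renewal
equation determines the point masses, so the two distributions coincide.
-/

open Matrix MeasureTheory ProbabilityTheory Finset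

theorem eq_of_sum_range_mul_eq {R : Type*} [Ring R] {a x y : ℕ → R} (ha : a 0 = 1)
    (h : ∀ m, ∑ s ∈ range (m + 1), x s * a (m - s) = ∑ s ∈ range (m + 1), y s * a (m - s)) :
    x = y := by
  funext m
  induction m using Nat.strong_induction_on with
  | _ m ih =>
    have hm := h m
    rw [sum_range_succ, sum_range_succ, Nat.sub_self, ha, mul_one, mul_one,
      sum_congr rfl fun s hs => by rw [ih s (mem_range.mp hs)]] at hm
    exact add_left_cancel hm

section FirstPassage

variable {ι R : Type*} [Fintype ι] [DecidableEq ι] [CommRing R]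

def absorbing (P : Matrix ι ι R) (i : ι) : Matrix ι ι R :=
  P.updateRow i (fun l => if l = i then 1 else 0)

theorem vecMul_absorbing (P : Matrix ι ι R) (i : ι) (x : ι → R) :
    x ᵥ* absorbing P i = Function.update x i 0 ᵥ* P + x i • Pi.single i 1 := by
  ext l
  simp only [vecMul, dotProduct, absorbing, updateRow_apply, Function.update_apply,
    Pi.add_apply, Pi.smul_apply, Pi.single_apply, smul_eq_mul, mul_ite, ite_mul, zero_mul,
    mul_one, mul_zero]
  rw [← add_sum_erase _ _ (mem_univ i), ← add_sum_erase _ _ (mem_univ i),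
    sum_congr rfl fun j hj => if_neg (ne_of_mem_erase hj),
    sum_congr rfl fun j hj => if_neg (ne_of_mem_erase hj)]
  simp only [↓reduceIte]
  split_ifs <;> ring

-- For the chain started from `π`, these are `P_π(T_i ≤ t)` and `P_π(T_i = s)`.
def absorbedMass (P : Matrix ι ι R) (π : ι → R) (i : ι) (t : ℕ) : R :=
  (π ᵥ* absorbing P i ^ t) i

def firstHitMass (P : Matrix ι ι R) (π : ι → R) (i : ι) : ℕ → R
  | 0 => π i
  | s + 1 => absorbedMass P π i (s + 1) - absorbedMass P π i s

theorem sum_range_firstHitMass (P : Matrix ι ι R) (π : ι → R) (i : ι) (t : ℕ) :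
    ∑ s ∈ range (t + 1), firstHitMass P π i s = absorbedMass P π i t := by
  induction t with
  | zero => simp [firstHitMass, absorbedMass]
  | succ t ih => rw [sum_range_succ, ih, firstHitMass, add_sub_cancel]

theorem update_vecMul_eq (P : Matrix ι ι R) (i : ι) (x : ι → R) :
    Function.update x i 0 ᵥ* P = Function.update (x ᵥ* absorbing P i) i 0
      + ((x ᵥ* absorbing P i) i - x i) • Pi.single i 1 := by
  ext j
  rcases eq_or_ne j i with rfl | h
  · simp [vecMul_absorbing]
  · simp [vecMul_absorbing, h]

theorem vecMul_pow_eq_update_add_sum (P : Matrix ι ι R) (π : ι → R) (i : ι) (m : ℕ) :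
    π ᵥ* P ^ m = Function.update (π ᵥ* absorbing P i ^ m) i 0
      + ∑ s ∈ range (m + 1), firstHitMass P π i s • (P ^ (m - s)) i := by
  induction m with
  | zero =>
    ext j
    rcases eq_or_ne j i with rfl | h
    · simp [firstHitMass]
    · simp [firstHitMass, h, one_apply, h.symm]
  | succ m ih =>
    have hrow : ∀ s ∈ range (m + 1), (firstHitMass P π i s • (P ^ (m - s)) i) ᵥ* P =
        firstHitMass P π i s • (P ^ (m + 1 - s)) i := by
      intro s hs
      rw [smul_vecMul, ← mul_apply_eq_vecMul, ← pow_succ,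
        Nat.sub_add_comm (mem_range_succ_iff.mp hs)]
    have hone : (P ^ 0) i = Pi.single i 1 := funext fun _ => one_eq_pi_single
    rw [pow_succ, ← vecMul_vecMul, ih, add_vecMul, sum_vecMul, sum_congr rfl hrow,
      update_vecMul_eq, sum_range_succ _ (m + 1), Nat.sub_self, hone]
    simp only [firstHitMass, absorbedMass, pow_succ, ← vecMul_vecMul]
    abel

theorem vecMul_pow_eq_self_s18 {P : Matrix ι ι R} {π : ι → R} (hπ : π ᵥ* P = π) (m : ℕ) :
    π ᵥ* P ^ m = π := by
  induction m with
  | zero => simp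
  | succ m ih => rw [pow_succ, ← vecMul_vecMul, ih, hπ]

theorem sum_range_firstHitMass_mul_pow_apply {P : Matrix ι ι R} {π : ι → R}
    (hπ : π ᵥ* P = π) (i : ι) (m : ℕ) :
    ∑ s ∈ range (m + 1), firstHitMass P π i s * (P ^ (m - s)) i i = π i := by
  have h := congrFun (vecMul_pow_eq_update_add_sum P π i m) i
  rw [vecMul_pow_eq_self_s18 hπ] at h
  simpa [Finset.sum_apply] using h.symm

end FirstPassage

section Stationary

variable {ι : Type*} [Fintype ι] [DecidableEq ι] {P : Matrix ι ι ℝ} {π : ι → ℝ}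

theorem pos_of_vecMul_eq_self (hπ : π ᵥ* P = π) (hπ_nonneg : ∀ i, 0 ≤ π i) (hπ_ne : π ≠ 0)
    {t : ℕ} (hP : ∀ i j, 0 < (P ^ t) i j) (j : ι) : 0 < π j := by
  obtain ⟨i, hi⟩ : ∃ i, π i ≠ 0 := Function.ne_iff.mp hπ_ne
  rw [← vecMul_pow_eq_self_s18 hπ t, vecMul, dotProduct]
  exact lt_of_lt_of_le (mul_pos ((hπ_nonneg i).lt_of_ne' hi) (hP i j))
    (single_le_sum (fun k _ => mul_nonneg (hπ_nonneg k) (hP k j).le) (mem_univ i))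

theorem apply_lt_one_of_vecMul_eq_self [Nontrivial ι] (hπ : π ᵥ* P = π)
    (hπ_nonneg : ∀ i, 0 ≤ π i) (hπ_sum : ∑ i, π i = 1) {t : ℕ} (hP : ∀ i j, 0 < (P ^ t) i j)
    (i : ι) : π i < 1 := by
  obtain ⟨j, hj⟩ := exists_ne i
  have hπ_ne : π ≠ 0 := fun h => by simp [h] at hπ_sum
  have hle : ∑ k ∈ {i, j}, π k ≤ ∑ k, π k :=
    sum_le_sum_of_subset_of_nonneg (subset_univ _) fun k _ _ => hπ_nonneg k
  rw [sum_pair hj.symm, hπ_sum] at hle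
  linarith [pos_of_vecMul_eq_self hπ hπ_nonneg hπ_ne hP j]

end Stationary

def partialSum {Ω : Type*} (V : ℕ → Ω → ℕ) (k : ℕ) (ω : Ω) : ℕ :=
  ∑ i ∈ range k, V i ω

theorem partialSum_succ {Ω : Type*} (V : ℕ → Ω → ℕ) (k : ℕ) (ω : Ω) :
    partialSum V (k + 1) ω = partialSum V k ω + V k ω :=
  sum_range_succ _ k

theorem le_partialSum {Ω : Type*} {V : ℕ → Ω → ℕ} {ω : Ω} (hω : ∀ i, 0 < V i ω) (k : ℕ) :
    k ≤ partialSum V k ω := by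
  simpa [partialSum] using card_nsmul_le_sum (range k) (V · ω) 1 fun i _ => hω i

section NatValued

variable {Ω : Type*} [MeasurableSpace Ω] {μ : Measure Ω}

theorem measureReal_le_eq_sum_range [IsFiniteMeasure μ] {X : Ω → ℕ} (hX : Measurable X)
    (m : ℕ) :
    μ.real {ω | X ω ≤ m} = ∑ s ∈ range (m + 1), μ.real {ω | X ω = s} := by
  calc μ.real {ω | X ω ≤ m} = μ.real (X ⁻¹' ↑(range (m + 1))) := by
        congr 1; ext ω; simp
    _ = _ :=
      (sum_measureReal_preimage_singleton _ fun s _ => hX (measurableSet_singleton s)).symm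

theorem ProbabilityTheory.IndepFun.measureReal_inter_preimage_eq_mul {β γ : Type*}
    [MeasurableSpace β] [MeasurableSpace γ] {X : Ω → β} {Y : Ω → γ} (h : IndepFun X Y μ)
    {s : Set β} {t : Set γ} (hs : MeasurableSet s) (ht : MeasurableSet t) :
    μ.real (X ⁻¹' s ∩ Y ⁻¹' t) = μ.real (X ⁻¹' s) * μ.real (Y ⁻¹' t) := by
  simp only [measureReal_def, h.measure_inter_preimage_eq_mul s t hs ht, ENNReal.toReal_mul]

theorem measureReal_le_eq_measureReal_add_le_add_sum [IsFiniteMeasure μ] {X Y : Ω → ℕ}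
    (hX : Measurable X) (hY : Measurable Y) (hXY : IndepFun X Y μ) (m : ℕ) :
    μ.real {ω | X ω ≤ m} = μ.real {ω | X ω + Y ω ≤ m}
      + ∑ s ∈ range (m + 1), μ.real {ω | X ω = s} * μ.real {ω | m - s < Y ω} := by
  have hsplit : {ω | X ω ≤ m} = {ω | X ω + Y ω ≤ m}
      ∪ ⋃ s ∈ range (m + 1), X ⁻¹' {s} ∩ Y ⁻¹' {y | m - s < y} := by
    ext ω
    simp only [Set.mem_ofPred_eq, Set.mem_union, Set.mem_iUnion, Set.mem_inter_iff,
      Set.mem_preimage, Set.mem_singleton_iff, mem_range, exists_prop]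
    constructor
    · intro h
      by_cases h' : X ω + Y ω ≤ m
      · exact .inl h'
      · exact .inr ⟨X ω, by omega, rfl, by omega⟩
    · rintro (h | ⟨s, hs, rfl, h⟩) <;> omega
  have hmeas : ∀ s, MeasurableSet (X ⁻¹' {s} ∩ Y ⁻¹' {y | m - s < y}) := fun s =>
    (hX (measurableSet_singleton s)).inter (hY (by measurability))
  rw [hsplit, measureReal_union _ (measurableSet_biUnion _ fun s _ => hmeas s)
      (measure_ne_top _ _) (measure_ne_top _ _),
    measureReal_biUnion_finset _ fun s _ => hmeas s]
  · congr 1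
    exact sum_congr rfl fun s _ => hXY.measureReal_inter_preimage_eq_mul
      (measurableSet_singleton s) (by measurability)
  · intro a _ b _ hab
    exact Set.disjoint_left.mpr fun ω ha hb => hab (ha.1.symm.trans hb.1)
  · refine Set.disjoint_left.mpr fun ω h h' => ?_
    simp only [Set.mem_ofPred_eq, Set.mem_iUnion, Set.mem_inter_iff, Set.mem_preimage,
      Set.mem_singleton_iff, mem_range, exists_prop] at h h'
    obtain ⟨s, -, rfl, hs⟩ := h'
    omega

end NatValued

section CompoundGeometric

variable {Ω : Type*} [MeasurableSpace Ω] {μ : Measure Ω}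

theorem measurable_partialSum {V : ℕ → Ω → ℕ} (hV : ∀ i, Measurable (V i)) (k : ℕ) :
    Measurable (partialSum V k) :=
  Finset.measurable_sum _ fun i _ => hV i

theorem measurable_partialSum_comp {V : ℕ → Ω → ℕ} {N : Ω → ℕ} (hV : ∀ i, Measurable (V i))
    (hN : Measurable N) : Measurable fun ω => partialSum V (N ω) ω :=
  (measurable_from_prod_countable_left (f := fun p : Ω × ℕ => partialSum V p.2 p.1)
    (measurable_partialSum hV)).comp (measurable_id.prodMk hN)

theorem measureReal_partialSum_comp_eq_sum [IsFiniteMeasure μ] {V : ℕ → Ω → ℕ} {N : Ω → ℕ}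
    (hV : ∀ i, Measurable (V i)) (hN : Measurable N) (hV_pos : ∀ᵐ ω ∂μ, ∀ i, 0 < V i ω)
    (hindep : ∀ k, IndepFun (partialSum V k) N μ) {s m : ℕ} (hsm : s ≤ m) :
    μ.real {ω | partialSum V (N ω) ω = s}
      = ∑ k ∈ range (m + 1), μ.real {ω | partialSum V k ω = s} * μ.real {ω | N ω = k} := by
  have hae : {ω | partialSum V (N ω) ω = s}
      =ᵐ[μ] ⋃ k ∈ range (m + 1), partialSum V k ⁻¹' {s} ∩ N ⁻¹' {k} := by
    refine Filter.eventuallyEq_set.mpr ?_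
    filter_upwards [hV_pos] with ω hω
    have := le_partialSum hω (N ω)
    simp only [Set.mem_iUnion, Set.mem_inter_iff, Set.mem_preimage,
      Set.mem_singleton_iff, mem_range, exists_prop]
    constructor
    · rintro rfl; exact ⟨N ω, by omega, rfl, rfl⟩
    · rintro ⟨k, -, h, rfl⟩; exact h
  have hmeas : ∀ k, MeasurableSet (partialSum V k ⁻¹' {s} ∩ N ⁻¹' {k}) := fun k =>
    (measurable_partialSum hV k (measurableSet_singleton s)).inter
      (hN (measurableSet_singleton k))
  rw [measureReal_congr hae, measureReal_biUnion_finset _ fun k _ => hmeas k]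
  · exact sum_congr rfl fun k _ => (hindep k).measureReal_inter_preimage_eq_mul
      (measurableSet_singleton s) (measurableSet_singleton k)
  · intro a _ b _ hab
    exact Set.disjoint_left.mpr fun ω ha hb => hab (ha.2.symm.trans hb.2)

theorem sum_range_measureReal_partialSum_comp_mul [IsProbabilityMeasure μ] {V : ℕ → Ω → ℕ}
    {N : Ω → ℕ} (hV : ∀ i, Measurable (V i)) (hN : Measurable N)
    (hV_pos : ∀ᵐ ω ∂μ, ∀ i, 0 < V i ω)
    (hindepN : ∀ k, IndepFun (partialSum V k) N μ)
    (hindepV : ∀ k, IndepFun (partialSum V k) (V k) μ)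
    {p q : ℝ} (hpq : p + q = 1) (hN_dist : ∀ k, μ.real {ω | N ω = k} = p * q ^ k)
    {G : ℕ → ℝ} (hV_dist : ∀ k t, μ.real {ω | t < V k ω} = G t) (m : ℕ) :
    ∑ s ∈ range (m + 1), μ.real {ω | partialSum V (N ω) ω = s} * (p + q * G (m - s)) = p := by
  set F : ℕ → ℝ := fun k => μ.real {ω | partialSum V k ω ≤ m}
  have hF_zero : F 0 = 1 := by simp [F, partialSum]
  have hF_succ : F (m + 1) = 0 := by
    rw [measureReal_eq_zero_iff, measure_eq_zero_iff_ae_notMem]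
    filter_upwards [hV_pos] with ω hω
    have := le_partialSum hω (m + 1)
    simp only [not_le]
    omega
  have hstep : ∀ k,
      ∑ s ∈ range (m + 1), μ.real {ω | partialSum V k ω = s} * (p + q * G (m - s))
        = p * F k + q * (F k - F (k + 1)) := by
    intro k
    have hsplit : F k = F (k + 1)
        + ∑ s ∈ range (m + 1), μ.real {ω | partialSum V k ω = s} * G (m - s) := by
      simpa only [← partialSum_succ, hV_dist] using measureReal_le_eq_measureReal_add_le_add_sum
        (measurable_partialSum hV k) (hV k) (hindepV k) m
    have hF : F k = ∑ s ∈ range (m + 1), μ.real {ω | partialSum V k ω = s} :=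
      measureReal_le_eq_sum_range (measurable_partialSum hV k) m
    calc _ = p * ∑ s ∈ range (m + 1), μ.real {ω | partialSum V k ω = s}
          + q * ∑ s ∈ range (m + 1), μ.real {ω | partialSum V k ω = s} * G (m - s) := by
          rw [mul_sum, mul_sum, ← sum_add_distrib]
          exact sum_congr rfl fun _ _ => by ring
      _ = _ := by rw [← hF]; linear_combination -q * hsplit
  calc ∑ s ∈ range (m + 1), μ.real {ω | partialSum V (N ω) ω = s} * (p + q * G (m - s))
      = ∑ k ∈ range (m + 1), p * q ^ k * ∑ s ∈ range (m + 1),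
          μ.real {ω | partialSum V k ω = s} * (p + q * G (m - s)) := by
        rw [sum_congr rfl fun s hs => by rw [measureReal_partialSum_comp_eq_sum hV hN hV_pos
          hindepN (mem_range_succ_iff.mp hs)]]
        simp only [sum_mul, mul_sum, hN_dist]
        rw [sum_comm]
        exact sum_congr rfl fun k _ => sum_congr rfl fun s _ => by ring
    _ = ∑ k ∈ range (m + 1), (p * q ^ k * F k - p * q ^ (k + 1) * F (k + 1)) := by
        refine sum_congr rfl fun k _ => ?_
        rw [hstep]
        linear_combination p * q ^ k * F k * hpq
    _ = p := by rw [sum_range_sub', hF_zero, hF_succ]; ring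

theorem ProbabilityTheory.iIndepFun.indepFun_partialSum {V : ℕ → Ω → ℕ} {N : Ω → ℕ}
    (hV : ∀ i, Measurable (V i)) (hN : Measurable N)
    (h : iIndepFun (fun i : ℕ => if i = 0 then N else V (i - 1)) μ)
    (k : ℕ) : IndepFun (partialSum V k) N μ ∧ IndepFun (partialSum V k) (V k) μ := by
  have hX : ∀ i, Measurable (if i = 0 then N else V (i - 1)) := by
    rintro (_ | i) <;> simp [hN, hV]
  have hW : partialSum V k
      = ∑ j ∈ (range k).image (· + 1), if j = 0 then N else V (j - 1) := by
    ext ω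
    rw [Finset.sum_apply, sum_image fun _ _ _ _ h => Nat.succ_injective h]
    simp [partialSum]
  rw [hW]
  constructor
  · simpa using h.indepFun_finsetSum_of_notMem hX (s := (range k).image (· + 1)) (i := 0)
      (by simp)
  · simpa using h.indepFun_finsetSum_of_notMem hX (s := (range k).image (· + 1)) (i := k + 1)
      (by simp)

end CompoundGeometric

theorem stmt18_general {n : ℕ} (hn : 1 ≤ n)
    (P : Matrix (Fin (n + 1)) (Fin (n + 1)) ℝ)
    (hprim : ∃ t : ℕ, ∀ i j, 0 < (P ^ t) i j)
    (π : Fin (n + 1) → ℝ) (hπ_nonneg : ∀ i, 0 ≤ π i) (hπ_sum : ∑ i, π i = 1)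
    (hπ_stat : π ᵥ* P = π)
    {Ω : Type*} [MeasureSpace Ω] [IsProbabilityMeasure (ℙ : Measure Ω)]
    (N : Ω → ℕ) (V : ℕ → Ω → ℕ)
    (hN_meas : Measurable N) (hV_meas : ∀ i, Measurable (V i))
    (hindep : iIndepFun
      (fun i : ℕ => if i = 0 then N else V (i - 1)) ℙ)
    (hN_dist : ∀ k : ℕ, (ℙ {ω | N ω = k}).toReal = π 0 * (1 - π 0) ^ k)
    (hV_dist : ∀ (i : ℕ) (t : ℕ),
      (ℙ {ω | t < V i ω}).toReal = ((P ^ t) 0 0 - π 0) / (1 - π 0)) :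
    ∀ t : ℕ,
      ((π ᵥ* Matrix.updateRow P 0 (fun l => if l = 0 then 1 else 0) ^ t) 0)
        = (ℙ {ω | ∑ i ∈ Finset.range (N ω), V i ω ≤ t}).toReal := by
  have : Nontrivial (Fin (n + 1)) := Fin.nontrivial_iff_two_le.mpr (by omega)
  obtain ⟨t₀, ht₀⟩ := hprim
  have hq : 1 - π 0 ≠ 0 :=
    (sub_pos.mpr (apply_lt_one_of_vecMul_eq_self hπ_stat hπ_nonneg hπ_sum ht₀ 0)).ne'
  have hV_pos : ∀ᵐ ω, ∀ i, 0 < V i ω := ae_all_iff.mpr fun i => by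
    have h := hV_dist i 0
    rw [pow_zero, one_apply_eq, div_self hq] at h
    exact (mem_ae_iff_prob_eq_one (hV_meas i measurableSet_Ioi)).mpr
      ((ENNReal.toReal_eq_one_iff _).mp h)
  have hrenewal : ∀ m, ∑ s ∈ range (m + 1), firstHitMass P π 0 s * (P ^ (m - s)) 0 0
      = ∑ s ∈ range (m + 1),
          volume.real {ω | partialSum V (N ω) ω = s} * (P ^ (m - s)) 0 0 := by
    intro m
    rw [sum_range_firstHitMass_mul_pow_apply hπ_stat, ← sum_range_measureReal_partialSum_comp_mul
      hV_meas hN_meas hV_pos (fun k => (hindep.indepFun_partialSum hV_meas hN_meas k).1)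
      (fun k => (hindep.indepFun_partialSum hV_meas hN_meas k).2) (add_sub_cancel _ 1) hN_dist
      hV_dist m]
    exact sum_congr rfl fun s _ => by field_simp; ring
  intro t
  calc _ = absorbedMass P π 0 t := rfl
    _ = ∑ s ∈ range (t + 1), volume.real {ω | partialSum V (N ω) ω = s} := by
      rw [← sum_range_firstHitMass,
        eq_of_sum_range_mul_eq (a := fun t => (P ^ t) 0 0) (by simp) hrenewal]
    _ = _ := (measureReal_le_eq_sum_range (measurable_partialSum_comp hV_meas hN_meas) t).symm

/-- Brown's representation, discrete time, without reversibility: for an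
irreducible aperiodic stochastic matrix `P` with stationary distribution `π` such that
`P^t(0,0)` is nonincreasing in `t`, if `N, V₁, V₂, …` are independent, `N` is Geometric
with `P(N = k) = π(0)(1−π(0))^k`, and the `V_i` are i.i.d. with
`P(V_i > t) = (P^t(0,0) − π(0))/(1 − π(0))`, then the hitting time of state 0 from a
stationary start is distributed as `Σ_{i=1}^N V_i`. -/
theorem stmt18 {n : ℕ} (hn : 1 ≤ n)
    (P : Matrix (Fin (n + 1)) (Fin (n + 1)) ℝ)
    (hP_nonneg : ∀ i j, 0 ≤ P i j) (hP_row : ∀ i, ∑ j, P i j = 1)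
    (hprim : ∃ t : ℕ, ∀ i j, 0 < (P ^ t) i j)
    (π : Fin (n + 1) → ℝ) (hπ_nonneg : ∀ i, 0 ≤ π i) (hπ_sum : ∑ i, π i = 1)
    (hπ_stat : π ᵥ* P = π)
    (hmono : ∀ t : ℕ, (P ^ (t + 1)) 0 0 ≤ (P ^ t) 0 0)
    {Ω : Type*} [MeasureSpace Ω] [IsProbabilityMeasure (ℙ : Measure Ω)]
    (N : Ω → ℕ) (V : ℕ → Ω → ℕ)
    (hN_meas : Measurable N) (hV_meas : ∀ i, Measurable (V i))
    (hindep : iIndepFun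
      (fun i : ℕ => if i = 0 then N else V (i - 1)) ℙ)
    (hN_dist : ∀ k : ℕ, (ℙ {ω | N ω = k}).toReal = π 0 * (1 - π 0) ^ k)
    (hV_dist : ∀ (i : ℕ) (t : ℕ),
      (ℙ {ω | t < V i ω}).toReal = ((P ^ t) 0 0 - π 0) / (1 - π 0)) :
    ∀ t : ℕ,
      ((π ᵥ* Matrix.updateRow P 0 (fun l => if l = 0 then 1 else 0) ^ t) 0)
        = (ℙ {ω | ∑ i ∈ Finset.range (N ω), V i ω ≤ t}).toReal :=
  stmt18_general hn P hprim π hπ_nonneg hπ_sum hπ_stat N V hN_meas hV_meas hindep hN_dist hV_dist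
end
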